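/- arXiv:1507.06030 — 7 statements merged into one kernel-verified Lean document; each statement's English description precedes it below -/
import Mathlib

section
/- Let λ be the rectangular Young diagram with k rows and m columns (k, m ≥ 1), and set θ = π/(2(k+m)). Then the product over all cells c of λ of cot(h(c)·θ) equals 1. -/
/-!
The point reflection `(i, j) ↦ (k - 1 - i, m - 1 - j)` of the rectangle sends a cell of hook
length `h` to one of hook length `k + m - h`, and `cot (h θ) * cot ((k + m - h) θ) = 1` because the
two angles add up to `π / 2`. All factors are positive, so the product is a positive number whose
square is `1`.
-/

open Real

/-- The rectangular Young diagram with `k` rows and `m` columns (0-indexed cells). -/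
def rectYoung (k m : ℕ) : YoungDiagram where
  cells := Finset.range k ×ˢ Finset.range m
  isLowerSet := by
    intro a b hba ha
    simp only [Finset.coe_product, Finset.coe_range, Set.mem_prod, Set.mem_Iio] at *
    exact ⟨lt_of_le_of_lt hba.1 ha.1, lt_of_le_of_lt hba.2 ha.2⟩

/-- The hook length of the cell `(i, j)` in a Young diagram `μ`. -/
def hookLength (μ : YoungDiagram) (i j : ℕ) : ℕ :=
  (μ.rowLen i - j) + (μ.colLen j - i) - 1

theorem Finset.prod_eq_one_of_mul_involution_eq_one {ι R : Type*} [CommSemiring R] [LinearOrder R]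
    [IsStrictOrderedRing R] {s : Finset ι} {f : ι → R} (σ : ι → ι) (hσ : ∀ c ∈ s, σ c ∈ s)
    (hσσ : ∀ c ∈ s, σ (σ c) = c) (hpos : ∀ c ∈ s, 0 < f c)
    (hmul : ∀ c ∈ s, f c * f (σ c) = 1) : ∏ c ∈ s, f c = 1 := by
  have hreindex : ∏ c ∈ s, f (σ c) = ∏ c ∈ s, f c :=
    Finset.prod_nbij' σ σ hσ hσ hσσ hσσ fun _ _ => rfl
  have hsq : (∏ c ∈ s, f c) ^ 2 = 1 := by
    rw [sq]
    nth_rewrite 2 [← hreindex]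
    rw [← Finset.prod_mul_distrib]
    exact Finset.prod_eq_one hmul
  exact (pow_eq_one_iff_of_nonneg (Finset.prod_pos hpos).le two_ne_zero).mp hsq

namespace Real

theorem cot_pi_div_two_sub (x : ℝ) : cot (π / 2 - x) = tan x := by
  rw [cot_eq_cos_div_sin, cos_pi_div_two_sub, sin_pi_div_two_sub, tan_eq_sin_div_cos]

theorem cot_pos_of_pos_of_lt_pi_div_two {x : ℝ} (h0 : 0 < x) (h1 : x < π / 2) : 0 < cot x := by
  rw [← inv_inv (cot x), cot_inv_eq_tan]
  exact inv_pos.mpr (tan_pos_of_pos_of_lt_pi_div_two h0 h1)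

theorem cot_mul_cot_of_add_eq_pi_div_two {x y : ℝ} (h0 : 0 < x) (h1 : x < π / 2)
    (hxy : x + y = π / 2) : cot x * cot y = 1 := by
  rw [eq_sub_of_add_eq' hxy, cot_pi_div_two_sub, ← cot_inv_eq_tan,
    mul_inv_cancel₀ (cot_pos_of_pos_of_lt_pi_div_two h0 h1).ne']

theorem nat_mul_pi_div_two_mul_mem_Ioo {a N : ℕ} (ha : 0 < a) (haN : a < N) :
    (a : ℝ) * (π / (2 * N)) ∈ Set.Ioo 0 (π / 2) := by
  have hN : (0 : ℝ) < N := by exact_mod_cast ha.trans haN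
  have haN' : (a : ℝ) < N := by exact_mod_cast haN
  constructor
  · have : (0 : ℝ) < a := by exact_mod_cast ha
    positivity
  · rw [mul_div_assoc', div_lt_div_iff₀ (by positivity) two_pos]
    nlinarith [pi_pos]

theorem cot_nat_mul_pi_div_two_mul_pos {a N : ℕ} (ha : 0 < a) (haN : a < N) :
    0 < cot (a * (π / (2 * N))) :=
  cot_pos_of_pos_of_lt_pi_div_two (nat_mul_pi_div_two_mul_mem_Ioo ha haN).1
    (nat_mul_pi_div_two_mul_mem_Ioo ha haN).2

theorem cot_nat_mul_pi_div_two_mul_cot_of_add_eq {a b N : ℕ} (ha : 0 < a) (hb : 0 < b)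
    (hab : a + b = N) : cot (a * (π / (2 * N))) * cot (b * (π / (2 * N))) = 1 := by
  have hN : (N : ℝ) ≠ 0 := by exact_mod_cast (show N ≠ 0 by omega)
  have habN : (a : ℝ) + b = N := by exact_mod_cast hab
  obtain ⟨h0, h1⟩ := nat_mul_pi_div_two_mul_mem_Ioo (N := N) ha (by omega)
  refine cot_mul_cot_of_add_eq_pi_div_two h0 h1 ?_
  rw [← add_mul, habN]
  field_simp

end Real

section rectYoung

variable {k m i j : ℕ}

theorem mem_rectYoung : (i, j) ∈ rectYoung k m ↔ i < k ∧ j < m := by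
  change (i, j) ∈ Finset.range k ×ˢ Finset.range m ↔ _
  simp

theorem rectYoung_rowLen (hi : i < k) : (rectYoung k m).rowLen i = m :=
  eq_of_forall_lt_iff fun j => by
    rw [← YoungDiagram.mem_iff_lt_rowLen, mem_rectYoung]
    exact and_iff_right hi

theorem rectYoung_colLen (hj : j < m) : (rectYoung k m).colLen j = k :=
  eq_of_forall_lt_iff fun i => by
    rw [← YoungDiagram.mem_iff_lt_colLen, mem_rectYoung]
    exact and_iff_left hj

theorem hookLength_rectYoung (hi : i < k) (hj : j < m) :
    hookLength (rectYoung k m) i j = k + m - 1 - i - j := by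
  rw [hookLength, rectYoung_rowLen hi, rectYoung_colLen hj]
  omega

end rectYoung

theorem rect_prod_cot_hookLength_eq_one_general (k m : ℕ) :
    ∏ c ∈ (rectYoung k m).cells,
      Real.cot ((hookLength (rectYoung k m) c.1 c.2 : ℝ) * (π / (2 * (k + m)))) = 1 := by
  rw [← Nat.cast_add]
  refine Finset.prod_eq_one_of_mul_involution_eq_one (fun c => (k - 1 - c.1, m - 1 - c.2))
    ?maps ?involutive ?pos ?mul
  case maps =>
    rintro ⟨i, j⟩ hc
    rw [YoungDiagram.mem_cells, mem_rectYoung] at hc ⊢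
    omega
  case involutive =>
    rintro ⟨i, j⟩ hc
    rw [YoungDiagram.mem_cells, mem_rectYoung] at hc
    ext <;> dsimp only <;> omega
  case pos =>
    rintro ⟨i, j⟩ hc
    rw [YoungDiagram.mem_cells, mem_rectYoung] at hc
    rw [hookLength_rectYoung hc.1 hc.2]
    exact cot_nat_mul_pi_div_two_mul_pos (by omega) (by omega)
  case mul =>
    rintro ⟨i, j⟩ hc
    rw [YoungDiagram.mem_cells, mem_rectYoung] at hc
    rw [hookLength_rectYoung hc.1 hc.2, hookLength_rectYoung (by omega) (by omega)]
    exact cot_nat_mul_pi_div_two_mul_cot_of_add_eq (by omega) (by omega) (by omega)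

/-- For the `k × m` rectangular Young diagram and `θ = π / (2 (k + m))`, the product of
`cot (h(c) θ)` over all cells `c` equals `1`. -/
theorem rect_prod_cot_hookLength_eq_one (k m : ℕ) (hk : 1 ≤ k) (hm : 1 ≤ m) :
    ∏ c ∈ (rectYoung k m).cells,
      Real.cot ((hookLength (rectYoung k m) c.1 c.2 : ℝ) * (π / (2 * (k + m)))) = 1 :=
  rect_prod_cot_hookLength_eq_one_general k m
end

section
/- For every m ≥ 0, the number of sequences (λ⁰, λ¹, ..., λ^{2m}) of Young diagrams with λ⁰ = λ^{2m} = ∅ such that for every i the diagram λ^{i+1} is obtained from λ^i by either adding exactly one cell or removing exactly one cell, equals the double factorial (2m−1)!! = 1·3·5···(2m−1). -/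
open YoungDiagram Finset

namespace Osc

lemma yd_ext {a b : YoungDiagram} (h : a.cells = b.cells) : a = b := by
  cases a; cases b; simpa using h

lemma yd_eq_of_le_of_card_le {a b : YoungDiagram} (h : a ≤ b) (hc : b.card ≤ a.card) : a = b :=
  yd_ext (Finset.eq_of_subset_of_card_le (YoungDiagram.cells_subset_iff.mpr h) hc)

lemma card_eq_zero_iff {a : YoungDiagram} : a.card = 0 ↔ a = ⊥ := by
  constructor
  · intro h
    exact (yd_eq_of_le_of_card_le bot_le (by simp [h])).symm
  · rintro rfl; simp [YoungDiagram.cells_bot]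

def UpSet (l : YoungDiagram) : Set YoungDiagram := {m | l ≤ m ∧ m.card = l.card + 1}
def LowSet (l : YoungDiagram) : Set YoungDiagram := {m | m ≤ l ∧ l.card = m.card + 1}

def desc (l : YoungDiagram) : Finset ℕ :=
  (Finset.range l.card).filter (fun i => l.rowLen (i+1) < l.rowLen i)

lemma lt_card_of_mem {μ : YoungDiagram} {i j : ℕ} (h : (i, j) ∈ μ) :
    i < μ.card ∧ j < μ.card := by
  constructor
  · have h1 : i < μ.colLen j := YoungDiagram.mem_iff_lt_colLen.mp h
    have h2 : μ.colLen j ≤ μ.card := by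
      rw [YoungDiagram.colLen_eq_card]
      exact Finset.card_le_card (Finset.filter_subset _ _)
    omega
  · have h1 : j < μ.rowLen i := YoungDiagram.mem_iff_lt_rowLen.mp h
    have h2 : μ.rowLen i ≤ μ.card := by
      rw [YoungDiagram.rowLen_eq_card]
      exact Finset.card_le_card (Finset.filter_subset _ _)
    omega

lemma finite_card_level (c : ℕ) : {μ : YoungDiagram | μ.card = c}.Finite := by
  apply Set.Finite.of_finite_image (f := fun μ => μ.cells)
  · apply Set.Finite.subset ((Finset.range c ×ˢ Finset.range c).powerset : Finset (Finset (ℕ × ℕ))).finite_toSet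
    rintro s ⟨μ, hμ, rfl⟩
    simp only [Finset.coe_powerset, Set.mem_preimage, Set.mem_powerset_iff, Finset.mem_coe,
      Finset.mem_powerset]
    intro x hx
    obtain ⟨x1, x2⟩ := x
    have := lt_card_of_mem (μ := μ) (by simpa using hx)
    simp [Finset.mem_product, hμ ▸ this]
  · intro a _ b _ h
    exact yd_ext h

lemma mem_desc {l : YoungDiagram} {i : ℕ} : i ∈ desc l ↔ l.rowLen (i+1) < l.rowLen i := by
  simp only [desc, Finset.mem_filter, Finset.mem_range, and_iff_right_iff_imp]
  intro h
  have h1 : (i, 0) ∈ l := YoungDiagram.mem_iff_lt_rowLen.mpr (by omega)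
  exact (lt_card_of_mem h1).1

def addA (l : YoungDiagram) : Finset ℕ := insert 0 ((desc l).image (· + 1))

lemma card_addA (l : YoungDiagram) : (addA l).card = (desc l).card + 1 := by
  rw [addA, Finset.card_insert_of_notMem (by simp), Finset.card_image_of_injective _
    (fun a b => by omega)]

lemma mem_addA {l : YoungDiagram} {i : ℕ} :
    i ∈ addA l ↔ i = 0 ∨ (0 < i ∧ l.rowLen i < l.rowLen (i-1)) := by
  simp only [addA, Finset.mem_insert, Finset.mem_image, mem_desc]
  constructor
  · rintro (rfl | ⟨j, hj, rfl⟩)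
    · exact Or.inl rfl
    · exact Or.inr ⟨by omega, by simpa using hj⟩
  · rintro (rfl | ⟨hi, hlt⟩)
    · exact Or.inl rfl
    · obtain ⟨j, rfl⟩ : ∃ j, i = j + 1 := ⟨i - 1, by omega⟩
      exact Or.inr ⟨j, by simpa using hlt, rfl⟩


lemma isLowerSet_del {l : YoungDiagram} {i : ℕ} (h : l.rowLen (i+1) < l.rowLen i) :
    IsLowerSet (↑(l.cells.erase (i, l.rowLen i - 1)) : Set (ℕ × ℕ)) := by
  rintro ⟨b1, b2⟩ ⟨a1, a2⟩ hab hb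
  simp only [Finset.coe_erase, Set.mem_diff, Finset.mem_coe, YoungDiagram.mem_cells,
    Set.mem_singleton_iff, Prod.mk.injEq] at hb ⊢
  obtain ⟨hbm, hbc⟩ := hb
  obtain ⟨h1, h2⟩ : a1 ≤ b1 ∧ a2 ≤ b2 := Prod.mk_le_mk.mp hab
  refine ⟨l.up_left_mem h1 h2 hbm, ?_⟩
  rintro ⟨ha1, ha2⟩
  rw [ha1] at h1
  rw [ha2] at h2
  by_cases hcase : b1 = i
  · have hbm' : (i, b2) ∈ l := hcase ▸ hbm
    have hb2 : b2 < l.rowLen i := YoungDiagram.mem_iff_lt_rowLen.mp hbm'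
    exact hbc ⟨hcase, by omega⟩
  · have hi1 : (i + 1, l.rowLen i - 1) ∈ l :=
      l.up_left_mem (show i + 1 ≤ b1 by omega) h2 hbm
    have := YoungDiagram.mem_iff_lt_rowLen.mp hi1
    omega

lemma isLowerSet_add {l : YoungDiagram} {i : ℕ}
    (h : i = 0 ∨ (0 < i ∧ l.rowLen i < l.rowLen (i-1))) :
    IsLowerSet (↑(insert (i, l.rowLen i) l.cells) : Set (ℕ × ℕ)) := by
  rintro ⟨b1, b2⟩ ⟨a1, a2⟩ hab hb
  simp only [Finset.coe_insert, Set.mem_insert_iff, Finset.mem_coe, YoungDiagram.mem_cells,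
    Prod.mk.injEq] at hb ⊢
  obtain ⟨h1, h2⟩ : a1 ≤ b1 ∧ a2 ≤ b2 := Prod.mk_le_mk.mp hab
  rcases hb with ⟨hb1, hb2⟩ | hbm
  · rw [hb1] at h1
    rw [hb2] at h2
    by_cases ha2 : a2 < l.rowLen i
    · exact Or.inr (YoungDiagram.mem_iff_lt_rowLen.mpr
        (lt_of_lt_of_le ha2 (l.rowLen_anti _ _ h1)))
    · have ha2' : a2 = l.rowLen i := by omega
      by_cases ha1 : a1 = i
      · exact Or.inl ⟨ha1, ha2'⟩
      · rcases h with rfl | ⟨hi, hlt⟩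
        · omega
        · refine Or.inr (YoungDiagram.mem_iff_lt_rowLen.mpr ?_)
          have : l.rowLen (i-1) ≤ l.rowLen a1 := l.rowLen_anti _ _ (by omega)
          omega
  · exact Or.inr (l.up_left_mem h1 h2 hbm)

open scoped Classical in
noncomputable def del (l : YoungDiagram) (i : ℕ) : YoungDiagram :=
  if h : IsLowerSet (↑(l.cells.erase (i, l.rowLen i - 1)) : Set (ℕ × ℕ)) then ⟨_, h⟩ else ⊥

open scoped Classical in
noncomputable def add (l : YoungDiagram) (i : ℕ) : YoungDiagram :=
  if h : IsLowerSet (↑(insert (i, l.rowLen i) l.cells) : Set (ℕ × ℕ)) then ⟨_, h⟩ else ⊥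

lemma del_cells {l : YoungDiagram} {i : ℕ} (h : i ∈ desc l) :
    (del l i).cells = l.cells.erase (i, l.rowLen i - 1) := by
  rw [del, dif_pos (isLowerSet_del (mem_desc.mp h))]

lemma add_cells {l : YoungDiagram} {i : ℕ} (h : i ∈ addA l) :
    (add l i).cells = insert (i, l.rowLen i) l.cells := by
  rw [add, dif_pos (isLowerSet_add (mem_addA.mp h))]

lemma corner_mem {l : YoungDiagram} {i : ℕ} (h : i ∈ desc l) :
    ((i, l.rowLen i - 1) : ℕ × ℕ) ∈ l.cells := by
  have := mem_desc.mp h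
  simpa using YoungDiagram.mem_iff_lt_rowLen.mpr (show l.rowLen i - 1 < l.rowLen i by omega)

lemma add_notMem (l : YoungDiagram) (i : ℕ) : ((i, l.rowLen i) : ℕ × ℕ) ∉ l.cells := by
  simp only [YoungDiagram.mem_cells, YoungDiagram.mem_iff_lt_rowLen]; omega

lemma del_mem_LowSet {l : YoungDiagram} {i : ℕ} (h : i ∈ desc l) : del l i ∈ LowSet l := by
  constructor
  · rw [← YoungDiagram.cells_subset_iff, del_cells h]
    exact Finset.erase_subset _ _
  · show l.cells.card = (del l i).cells.card + 1
    rw [del_cells h, Finset.card_erase_of_mem (corner_mem h)]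
    have : 0 < l.cells.card := Finset.card_pos.mpr ⟨_, corner_mem h⟩
    omega

lemma add_mem_UpSet {l : YoungDiagram} {i : ℕ} (h : i ∈ addA l) : add l i ∈ UpSet l := by
  constructor
  · rw [← YoungDiagram.cells_subset_iff, add_cells h]
    exact Finset.subset_insert _ _
  · show (add l i).cells.card = l.cells.card + 1
    rw [add_cells h, Finset.card_insert_of_notMem (add_notMem l i)]

lemma ncard_LowSet (l : YoungDiagram) : (LowSet l).ncard = (desc l).card := by
  have hbij : Set.BijOn (del l) ↑(desc l) (LowSet l) := by
    refine ⟨fun i hi => del_mem_LowSet (by simpa using hi), ?_, ?_⟩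
    · intro i hi j hj hij
      simp only [Finset.mem_coe] at hi hj
      have hmi : ((i, l.rowLen i - 1) : ℕ × ℕ) ∉ (del l i).cells := by
        rw [del_cells hi]; simp
      rw [hij, del_cells hj] at hmi
      by_contra hne
      refine hmi (Finset.mem_erase.mpr ⟨?_, corner_mem hi⟩)
      exact fun hEq => hne (congrArg Prod.fst hEq)
    · rintro m ⟨hle, hcard⟩
      have hsub : m.cells ⊆ l.cells := YoungDiagram.cells_subset_iff.mpr hle
      have hcd : (l.cells \ m.cells).card = 1 := by
        rw [Finset.card_sdiff_of_subset hsub]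
        show l.card - m.card = 1
        omega
      obtain ⟨c, hc⟩ := Finset.card_eq_one.mp hcd
      obtain ⟨i, j⟩ := c
      have hcl : ((i, j) : ℕ × ℕ) ∈ l.cells :=
        (Finset.mem_sdiff.mp (hc ▸ Finset.mem_singleton_self _)).1
      have hcm : ((i, j) : ℕ × ℕ) ∉ m.cells :=
        (Finset.mem_sdiff.mp (hc ▸ Finset.mem_singleton_self _)).2
      have hmem : ∀ x, x ∈ l.cells → x ≠ (i, j) → x ∈ m.cells := by
        intro x hx hne
        by_contra hxm
        have hx2 : x ∈ l.cells \ m.cells := Finset.mem_sdiff.mpr ⟨hx, hxm⟩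
        rw [hc] at hx2
        exact hne (Finset.mem_singleton.mp hx2)
      have hj2 : j < l.rowLen i := YoungDiagram.mem_iff_lt_rowLen.mp (by simpa using hcl)
      have hj1 : l.rowLen i ≤ j + 1 := by
        by_contra hcon
        push_neg at hcon
        have h1 : ((i, j+1) : ℕ × ℕ) ∈ l.cells := by
          simpa using YoungDiagram.mem_iff_lt_rowLen.mpr hcon
        have h2 : ((i, j+1) : ℕ × ℕ) ∈ m.cells := hmem _ h1 (by simp)
        have h3 : (i, j) ∈ m := m.up_left_mem (le_refl i) (Nat.le_succ j) (by simpa using h2)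
        exact hcm (by simpa using h3)
      have hjr : j = l.rowLen i - 1 := by omega
      have hdesc : i ∈ desc l := by
        rw [mem_desc]
        have hnm : ((i+1, j) : ℕ × ℕ) ∉ l.cells := by
          intro hmem1
          have h2 : ((i+1, j) : ℕ × ℕ) ∈ m.cells := hmem _ hmem1 (by simp)
          have h3 : (i, j) ∈ m := m.up_left_mem (Nat.le_succ i) (le_refl j) (by simpa using h2)
          exact hcm (by simpa using h3)
        have h4 : ¬ (j < l.rowLen (i+1)) := fun hlt => hnm
          (by simpa using YoungDiagram.mem_iff_lt_rowLen.mpr hlt)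
        omega
      refine ⟨i, by simpa using hdesc, ?_⟩
      refine (yd_ext ?_).symm
      rw [del_cells hdesc, ← hjr]
      apply Finset.ext
      intro x
      simp only [Finset.mem_erase]
      constructor
      · intro hx
        refine ⟨?_, hsub hx⟩
        rintro rfl; exact hcm hx
      · rintro ⟨hne, hx⟩; exact hmem x hx hne
  rw [← hbij.image_eq, Set.ncard_image_of_injOn hbij.injOn, Set.ncard_coe_finset]

lemma ncard_UpSet (l : YoungDiagram) : (UpSet l).ncard = (addA l).card := by
  have hbij : Set.BijOn (add l) ↑(addA l) (UpSet l) := by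
    refine ⟨fun i hi => add_mem_UpSet (by simpa using hi), ?_, ?_⟩
    · intro i hi j hj hij
      simp only [Finset.mem_coe] at hi hj
      have hmi : ((i, l.rowLen i) : ℕ × ℕ) ∈ (add l i).cells := by
        rw [add_cells hi]; exact Finset.mem_insert_self _ _
      rw [hij, add_cells hj] at hmi
      rcases Finset.mem_insert.mp hmi with hEq | hmem1
      · exact congrArg Prod.fst hEq
      · exact absurd hmem1 (add_notMem l i)
    · rintro m ⟨hle, hcard⟩
      have hsub : l.cells ⊆ m.cells := YoungDiagram.cells_subset_iff.mpr hle
      have hcd : (m.cells \ l.cells).card = 1 := by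
        rw [Finset.card_sdiff_of_subset hsub]
        show m.card - l.card = 1
        omega
      obtain ⟨c, hc⟩ := Finset.card_eq_one.mp hcd
      obtain ⟨i, j⟩ := c
      have hcl : ((i, j) : ℕ × ℕ) ∈ m.cells :=
        (Finset.mem_sdiff.mp (hc ▸ Finset.mem_singleton_self _)).1
      have hcm : ((i, j) : ℕ × ℕ) ∉ l.cells :=
        (Finset.mem_sdiff.mp (hc ▸ Finset.mem_singleton_self _)).2
      have hmem : ∀ x, x ∈ m.cells → x ≠ (i, j) → x ∈ l.cells := by
        intro x hx hne
        by_contra hxm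
        have hx2 : x ∈ m.cells \ l.cells := Finset.mem_sdiff.mpr ⟨hx, hxm⟩
        rw [hc] at hx2
        exact hne (Finset.mem_singleton.mp hx2)
      have hj2 : l.rowLen i ≤ j := by
        have := YoungDiagram.mem_iff_lt_rowLen.not.mp (by simpa using hcm)
        omega
      have hj1 : j ≤ l.rowLen i := by
        by_contra hcon
        push_neg at hcon
        have h1 : ((i, l.rowLen i) : ℕ × ℕ) ∈ m.cells := by
          have : (i, l.rowLen i) ∈ m := m.up_left_mem (le_refl i) (le_of_lt hcon) (by simpa using hcl)
          simpa using this
        have h2 : ((i, l.rowLen i) : ℕ × ℕ) ∈ l.cells :=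
          hmem _ h1 (by simp [Prod.ext_iff]; omega)
        exact add_notMem l i h2
      have hjr : j = l.rowLen i := by omega
      have haddA : i ∈ addA l := by
        rw [mem_addA]
        rcases Nat.eq_zero_or_pos i with rfl | hi
        · exact Or.inl rfl
        · refine Or.inr ⟨hi, ?_⟩
          have h1 : ((i-1, j) : ℕ × ℕ) ∈ m.cells := by
            have : (i-1, j) ∈ m := m.up_left_mem (Nat.sub_le i 1) (le_refl j) (by simpa using hcl)
            simpa using this
          have h2 : ((i-1, j) : ℕ × ℕ) ∈ l.cells := hmem _ h1 (by simp [Prod.ext_iff]; omega)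
          have := YoungDiagram.mem_iff_lt_rowLen.mp (by simpa using h2 :
            ((i-1 : ℕ), j) ∈ l)
          omega
      refine ⟨i, by simpa using haddA, ?_⟩
      refine (yd_ext ?_).symm
      rw [add_cells haddA, ← hjr]
      apply Finset.ext
      intro x
      simp only [Finset.mem_insert]
      constructor
      · intro hx
        by_cases hEq : x = (i, j)
        · exact Or.inl hEq
        · exact Or.inr (hmem x hx hEq)
      · rintro (rfl | hx)
        · exact hcl
        · exact hsub hx
  rw [← hbij.image_eq, Set.ncard_image_of_injOn hbij.injOn, Set.ncard_coe_finset]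

lemma finite_UpSet (l : YoungDiagram) : (UpSet l).Finite :=
  (finite_card_level (l.card + 1)).subset (fun _ hm => hm.2)

lemma finite_LowSet (l : YoungDiagram) : (LowSet l).Finite := by
  refine (finite_card_level (l.card - 1)).subset (fun m hm => ?_)
  have := hm.2
  simp only [Set.mem_setOf_eq]
  omega

noncomputable def ups (l : YoungDiagram) : Finset YoungDiagram := (finite_UpSet l).toFinset
noncomputable def lows (l : YoungDiagram) : Finset YoungDiagram := (finite_LowSet l).toFinset

lemma mem_ups {l m : YoungDiagram} : m ∈ ups l ↔ l ≤ m ∧ m.card = l.card + 1 := by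
  simp [ups, UpSet]

lemma mem_lows {l m : YoungDiagram} : m ∈ lows l ↔ m ≤ l ∧ l.card = m.card + 1 := by
  simp [lows, LowSet]

lemma card_ups_eq (l : YoungDiagram) : (ups l).card = (lows l).card + 1 := by
  have h1 : (ups l).card = (UpSet l).ncard := by
    rw [Set.ncard_eq_toFinset_card _ (finite_UpSet l)]; rfl
  have h2 : (lows l).card = (LowSet l).ncard := by
    rw [Set.ncard_eq_toFinset_card _ (finite_LowSet l)]; rfl
  rw [h1, h2, ncard_UpSet, ncard_LowSet, card_addA]


noncomputable instance : DecidableEq YoungDiagram := Classical.decEq _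

lemma card_sup_add_card_inf (a b : YoungDiagram) :
    (a ⊔ b).card + (a ⊓ b).card = a.card + b.card := by
  show (a ⊔ b).cells.card + (a ⊓ b).cells.card = a.cells.card + b.cells.card
  rw [YoungDiagram.cells_sup, YoungDiagram.cells_inf]
  exact Finset.card_union_add_card_inter _ _

lemma mem_lows_iff_mem_ups {l m : YoungDiagram} : l ∈ lows m ↔ m ∈ ups l := by
  rw [mem_lows, mem_ups]

lemma exch1 {l m ν : YoungDiagram} (hm : m ∈ ups l) (hν : ν ∈ lows m) (hne : ν ≠ l) :
    l ⊓ ν ∈ lows l ∧ ν ∈ ups (l ⊓ ν) ∧ l ⊔ ν = m := by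
  rw [mem_ups] at hm
  rw [mem_lows] at hν
  obtain ⟨hlm, hcm⟩ := hm
  obtain ⟨hνm, hcν⟩ := hν
  have hνc : ν.card = l.card := by omega
  have hsup_le : l ⊔ ν ≤ m := sup_le hlm hνm
  have hsup_card : (l ⊔ ν).card = l.card + 1 := by
    have h1 : (l ⊔ ν).card ≤ m.card :=
      Finset.card_le_card (YoungDiagram.cells_subset_iff.mpr hsup_le)
    have h2 : l.card ≤ (l ⊔ ν).card :=
      Finset.card_le_card (YoungDiagram.cells_subset_iff.mpr le_sup_left)
    rcases Nat.lt_or_ge l.card (l ⊔ ν).card with h | h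
    · omega
    · exfalso
      have : l = l ⊔ ν := yd_eq_of_le_of_card_le le_sup_left h
      have hνl : ν ≤ l := this ▸ le_sup_right
      exact hne (yd_eq_of_le_of_card_le hνl (by omega))
  have hsup_eq : l ⊔ ν = m := yd_eq_of_le_of_card_le hsup_le (by omega)
  have hinf_card : (l ⊓ ν).card + 1 = l.card := by
    have := card_sup_add_card_inf l ν
    omega
  exact ⟨mem_lows.mpr ⟨inf_le_left, by omega⟩, mem_ups.mpr ⟨inf_le_right, by omega⟩, hsup_eq⟩

lemma exch2 {l m ν : YoungDiagram} (hm : m ∈ lows l) (hν : ν ∈ ups m) (hne : ν ≠ l) :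
    l ⊔ ν ∈ ups l ∧ ν ∈ lows (l ⊔ ν) ∧ l ⊓ ν = m := by
  rw [mem_lows] at hm
  rw [mem_ups] at hν
  obtain ⟨hml, hcm⟩ := hm
  obtain ⟨hmν, hcν⟩ := hν
  have hνc : ν.card = l.card := by omega
  have hinf_ge : m ≤ l ⊓ ν := le_inf hml hmν
  have hinf_card : (l ⊓ ν).card + 1 = l.card := by
    have h1 : m.card ≤ (l ⊓ ν).card :=
      Finset.card_le_card (YoungDiagram.cells_subset_iff.mpr hinf_ge)
    have h2 : (l ⊓ ν).card ≤ l.card :=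
      Finset.card_le_card (YoungDiagram.cells_subset_iff.mpr inf_le_left)
    rcases Nat.lt_or_ge (l ⊓ ν).card l.card with h | h
    · omega
    · exfalso
      have h3 : l ⊓ ν = l := yd_eq_of_le_of_card_le inf_le_left (by omega)
      have h4 : l ≤ ν := h3 ▸ inf_le_right
      exact hne (yd_eq_of_le_of_card_le h4 (by omega)).symm
  have hinf_eq : l ⊓ ν = m := (yd_eq_of_le_of_card_le hinf_ge (by omega)).symm
  have hsup_card : (l ⊔ ν).card = l.card + 1 := by
    have := card_sup_add_card_inf l ν
    omega
  exact ⟨mem_ups.mpr ⟨le_sup_left, by omega⟩, mem_lows.mpr ⟨le_sup_right, by omega⟩, hinf_eq⟩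

lemma swap_sum (l : YoungDiagram) (h : YoungDiagram → ℕ) :
    ∑ m ∈ ups l, ∑ ν ∈ (lows m).erase l, h ν =
      ∑ m ∈ lows l, ∑ ν ∈ (ups m).erase l, h ν := by
  rw [Finset.sum_sigma' (ups l) (fun m => (lows m).erase l) (fun _ ν => h ν),
    Finset.sum_sigma' (lows l) (fun m => (ups m).erase l) (fun _ ν => h ν)]
  refine Finset.sum_nbij' (fun p => ⟨l ⊓ p.2, p.2⟩) (fun p => ⟨l ⊔ p.2, p.2⟩) ?_ ?_ ?_ ?_ ?_
  · rintro ⟨m, ν⟩ hp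
    rw [Finset.mem_sigma] at hp ⊢
    obtain ⟨h1, h2⟩ := hp
    rw [Finset.mem_erase] at h2
    obtain ⟨e1, e2, _⟩ := exch1 h1 h2.2 h2.1
    exact ⟨e1, Finset.mem_erase.mpr ⟨h2.1, e2⟩⟩
  · rintro ⟨m, ν⟩ hp
    rw [Finset.mem_sigma] at hp ⊢
    obtain ⟨h1, h2⟩ := hp
    rw [Finset.mem_erase] at h2
    obtain ⟨e1, e2, _⟩ := exch2 h1 h2.2 h2.1
    exact ⟨e1, Finset.mem_erase.mpr ⟨h2.1, e2⟩⟩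
  · rintro ⟨m, ν⟩ hp
    rw [Finset.mem_sigma] at hp
    obtain ⟨h1, h2⟩ := hp
    rw [Finset.mem_erase] at h2
    obtain ⟨_, _, e3⟩ := exch1 h1 h2.2 h2.1
    simp [e3]
  · rintro ⟨m, ν⟩ hp
    rw [Finset.mem_sigma] at hp
    obtain ⟨h1, h2⟩ := hp
    rw [Finset.mem_erase] at h2
    obtain ⟨_, _, e3⟩ := exch2 h1 h2.2 h2.1
    simp [e3]
  · rintro ⟨m, ν⟩ _
    rfl

noncomputable def Uc : ℕ → YoungDiagram → ℕ
  | 0, l => if l = ⊥ then 1 else 0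
  | n+1, l => ∑ m ∈ lows l, Uc n m

lemma Uc_ne_card {n : ℕ} {l : YoungDiagram} (h : l.card ≠ n) : Uc n l = 0 := by
  induction n generalizing l with
  | zero =>
    rw [Uc, if_neg]
    intro hb
    exact h (hb ▸ card_eq_zero_iff.mpr rfl)
  | succ n ih =>
    rw [Uc]
    refine Finset.sum_eq_zero fun m hm => ih ?_
    rw [mem_lows] at hm
    omega

lemma U_id : ∀ n : ℕ, ∀ l : YoungDiagram,
    ∑ m ∈ ups l, Uc (n+1) m = (n+1) * Uc n l := by
  intro n
  induction n with
  | zero =>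
    intro l
    have hstep : ∀ m ∈ ups l, Uc 1 m = Uc 0 l + ∑ ν ∈ (lows m).erase l, Uc 0 ν := by
      intro m hm
      rw [show Uc 1 m = ∑ ν ∈ lows m, Uc 0 ν from rfl,
        ← Finset.add_sum_erase _ _ (mem_lows_iff_mem_ups.mpr hm)]
    rw [Finset.sum_congr rfl hstep, Finset.sum_add_distrib, Finset.sum_const, smul_eq_mul,
      swap_sum]
    have hz : ∑ m ∈ lows l, ∑ ν ∈ (ups m).erase l, Uc 0 ν = 0 := by
      refine Finset.sum_eq_zero fun m hm => Finset.sum_eq_zero fun ν hν => ?_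
      rw [Finset.mem_erase, mem_ups] at hν
      refine Uc_ne_card ?_
      omega
    rw [hz, add_zero, card_ups_eq]
    by_cases hl : l = ⊥
    · subst hl
      have : lows (⊥ : YoungDiagram) = ∅ := by
        rw [Finset.eq_empty_iff_forall_notMem]
        intro m hm
        rw [mem_lows] at hm
        have : (⊥ : YoungDiagram).card = 0 := card_eq_zero_iff.mpr rfl
        omega
      simp [this]
    · rw [show Uc 0 l = 0 from Uc_ne_card (fun hc => hl (card_eq_zero_iff.mp hc))]
      ring
  | succ n ih =>
    intro l
    set A := Uc (n+1) l with hA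
    have hstep : ∀ m ∈ ups l, Uc (n+2) m = A + ∑ ν ∈ (lows m).erase l, Uc (n+1) ν := by
      intro m hm
      rw [show Uc (n+2) m = ∑ ν ∈ lows m, Uc (n+1) ν from rfl,
        ← Finset.add_sum_erase _ _ (mem_lows_iff_mem_ups.mpr hm)]
    rw [Finset.sum_congr rfl hstep, Finset.sum_add_distrib, Finset.sum_const, smul_eq_mul,
      swap_sum, card_ups_eq]
    have key : ∑ m ∈ lows l, ∑ ν ∈ (ups m).erase l, Uc (n+1) ν + (lows l).card * A =
        (n+1) * A := by
      have h1 : ∀ m ∈ lows l, ∑ ν ∈ (ups m).erase l, Uc (n+1) ν + A =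
          (n+1) * Uc n m := by
        intro m hm
        rw [add_comm, Finset.add_sum_erase _ _ (mem_lows_iff_mem_ups.mp hm), ih m]
      calc ∑ m ∈ lows l, ∑ ν ∈ (ups m).erase l, Uc (n+1) ν + (lows l).card * A
          = ∑ m ∈ lows l, (∑ ν ∈ (ups m).erase l, Uc (n+1) ν + A) := by
            rw [Finset.sum_add_distrib, Finset.sum_const, smul_eq_mul]
        _ = ∑ m ∈ lows l, (n+1) * Uc n m := Finset.sum_congr rfl h1
        _ = (n+1) * ∑ m ∈ lows l, Uc n m := by rw [Finset.mul_sum]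
        _ = (n+1) * A := by rw [hA]; rfl
    calc ((lows l).card + 1) * A + ∑ m ∈ lows l, ∑ ν ∈ (ups m).erase l, Uc (n+1) ν
        = A + (∑ m ∈ lows l, ∑ ν ∈ (ups m).erase l, Uc (n+1) ν + (lows l).card * A) := by
          ring
      _ = A + (n+1) * A := by rw [key]
      _ = (n+2) * A := by ring


def E : ℕ → ℕ
  | 0 => 1
  | 1 => 0
  | n+2 => (n+1) * E n

noncomputable def F (l : YoungDiagram) : ℕ := Uc l.card l

noncomputable def W : ℕ → YoungDiagram → ℕ
  | 0, l => if l = ⊥ then 1 else 0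
  | n+1, l => ∑ m ∈ ups l, W n m + ∑ m ∈ lows l, W n m

lemma F_bot : F ⊥ = 1 := by
  have : (⊥ : YoungDiagram).card = 0 := card_eq_zero_iff.mpr rfl
  rw [F, this]
  show (if (⊥ : YoungDiagram) = ⊥ then 1 else 0) = 1
  simp

lemma lows_bot : lows (⊥ : YoungDiagram) = ∅ := by
  rw [Finset.eq_empty_iff_forall_notMem]
  intro m hm
  rw [mem_lows] at hm
  have : (⊥ : YoungDiagram).card = 0 := card_eq_zero_iff.mpr rfl
  omega

lemma sum_lows_F (l : YoungDiagram) (hl : l ≠ ⊥) : ∑ m ∈ lows l, F m = F l := by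
  obtain ⟨k, hk⟩ : ∃ k, l.card = k + 1 := by
    have : l.card ≠ 0 := fun h => hl (card_eq_zero_iff.mp h)
    exact ⟨l.card - 1, by omega⟩
  have h1 : ∀ m ∈ lows l, F m = Uc k m := by
    intro m hm
    rw [F, (show m.card = k by have := (mem_lows.mp hm).2; omega)]
  rw [Finset.sum_congr rfl h1, F, hk]
  rfl

lemma sum_ups_F (l : YoungDiagram) : ∑ m ∈ ups l, F m = (l.card + 1) * F l := by
  have h1 : ∀ m ∈ ups l, F m = Uc (l.card + 1) m := by
    intro m hm
    rw [F, (mem_ups.mp hm).2]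
  rw [Finset.sum_congr rfl h1, U_id l.card l, F]

lemma key_arith (n j : ℕ) :
    (j+2) * Nat.choose n (j+2) * E (n - (j+2)) + Nat.choose n j * E (n - j)
      = Nat.choose (n+1) (j+1) * E (n - j) := by
  by_cases h1 : n < j + 2
  · rw [Nat.choose_eq_zero_of_lt h1]
    simp only [Nat.mul_zero, Nat.zero_mul, Nat.zero_add, mul_zero, zero_mul, zero_add]
    rcases Nat.lt_or_ge n j with h2 | h2
    · rw [Nat.choose_eq_zero_of_lt h2, Nat.choose_eq_zero_of_lt (by omega)]
    · rcases Nat.eq_or_lt_of_le h2 with h3 | h3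
      · rw [← h3, Nat.choose_self, Nat.choose_self]
      · have h4 : n = j + 1 := by omega
        rw [show n - j = 1 by omega]
        show _ * E 1 = _ * E 1
        rw [show E 1 = 0 from rfl, mul_zero, mul_zero]
  · push_neg at h1
    obtain ⟨e, he⟩ : ∃ e, n - j = e + 2 := ⟨n - j - 2, by omega⟩
    have hE : E (n - j) = (e+1) * E e := by rw [he]; rfl
    have hE2 : E (n - (j+2)) = E e := by rw [show n - (j+2) = e by omega]
    have hc : Nat.choose n (j+2) * (j+2) = Nat.choose n (j+1) * (e+1) := by
      rw [Nat.choose_succ_right_eq n (j+1), show n - (j+1) = e + 1 by omega]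
    have hcs : Nat.choose (n+1) (j+1) = Nat.choose n j + Nat.choose n (j+1) :=
      Nat.choose_succ_succ n j
    rw [hE, hE2, hcs]
    calc (j+2) * Nat.choose n (j+2) * E e + Nat.choose n j * ((e+1) * E e)
        = Nat.choose n (j+2) * (j+2) * E e + Nat.choose n j * ((e+1) * E e) := by ring
      _ = Nat.choose n (j+1) * (e+1) * E e + Nat.choose n j * ((e+1) * E e) := by rw [hc]
      _ = (Nat.choose n j + Nat.choose n (j+1)) * ((e+1) * E e) := by ring

lemma W_formula : ∀ n : ℕ, ∀ l : YoungDiagram,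
    W n l = Nat.choose n l.card * E (n - l.card) * F l := by
  intro n
  induction n with
  | zero =>
    intro l
    by_cases hl : l = ⊥
    · subst hl
      have hc : (⊥ : YoungDiagram).card = 0 := card_eq_zero_iff.mpr rfl
      rw [hc]
      show (if (⊥ : YoungDiagram) = ⊥ then 1 else 0) = Nat.choose 0 0 * E 0 * F ⊥
      rw [F_bot, if_pos rfl]
      rfl
    · have hc : 0 < l.card := by
        have : l.card ≠ 0 := fun h => hl (card_eq_zero_iff.mp h)
        omega
      show (if l = ⊥ then 1 else 0) = _
      rw [if_neg hl, Nat.choose_eq_zero_of_lt hc]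
      ring
  | succ n ih =>
    intro l
    have hups : ∑ m ∈ ups l, W n m =
        Nat.choose n (l.card + 1) * E (n - (l.card + 1)) * ((l.card + 1) * F l) := by
      have h1 : ∀ m ∈ ups l, W n m =
          Nat.choose n (l.card + 1) * E (n - (l.card + 1)) * F m := by
        intro m hm
        rw [ih m, (mem_ups.mp hm).2]
      rw [Finset.sum_congr rfl h1, ← Finset.mul_sum, sum_ups_F]
    by_cases hl : l = ⊥
    · subst hl
      have hc : (⊥ : YoungDiagram).card = 0 := card_eq_zero_iff.mpr rfl
      show ∑ m ∈ ups ⊥, W n m + ∑ m ∈ lows ⊥, W n m = _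
      rw [lows_bot, Finset.sum_empty, add_zero, hups, hc, F_bot, Nat.choose_zero_right,
        Nat.sub_zero]
      simp only [mul_one, one_mul, zero_add]
      cases n with
      | zero =>
        show Nat.choose 0 1 * E (0 - 1) * 1 = E (0 + 1)
        rw [show Nat.choose 0 1 = 0 from rfl, show E (0 + 1) = 0 from rfl]
        ring
      | succ k =>
        rw [Nat.choose_one_right, show k + 1 - 1 = k by omega,
          show E (k + 1 + 1) = (k+1) * E k from rfl]
    · obtain ⟨j, hj⟩ : ∃ j, l.card = j + 1 := by
        have : l.card ≠ 0 := fun h => hl (card_eq_zero_iff.mp h)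
        exact ⟨l.card - 1, by omega⟩
      have hlows : ∑ m ∈ lows l, W n m = Nat.choose n j * E (n - j) * F l := by
        have h1 : ∀ m ∈ lows l, W n m = Nat.choose n j * E (n - j) * F m := by
          intro m hm
          rw [ih m, (show m.card = j by have := (mem_lows.mp hm).2; omega)]
        rw [Finset.sum_congr rfl h1, ← Finset.mul_sum, sum_lows_F l hl]
      show ∑ m ∈ ups l, W n m + ∑ m ∈ lows l, W n m = _
      rw [hups, hlows, hj, show n + 1 - (j + 1) = n - j by omega]
      calc Nat.choose n (j+1+1) * E (n - (j+1+1)) * ((j+1+1) * F l)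
            + Nat.choose n j * E (n - j) * F l
          = ((j+2) * Nat.choose n (j+2) * E (n - (j+2)) + Nat.choose n j * E (n - j)) * F l := by
            ring
        _ = Nat.choose (n+1) (j+1) * E (n - j) * F l := by rw [key_arith n j]

lemma E_prod (m : ℕ) : E (2 * m) = ∏ i ∈ Finset.range m, (2 * i + 1) := by
  induction m with
  | zero => rfl
  | succ k ih =>
    rw [Finset.prod_range_succ, ← ih, show 2 * (k + 1) = 2 * k + 2 by ring,
      show E (2 * k + 2) = (2 * k + 1) * E (2 * k) from rfl]
    ring


def Adj (a b : YoungDiagram) : Prop :=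
  (a ≤ b ∧ b.card = a.card + 1) ∨ (b ≤ a ∧ a.card = b.card + 1)

def PathSet (n : ℕ) (l : YoungDiagram) : Set (Fin (n+1) → YoungDiagram) :=
  {f | f 0 = ⊥ ∧ f (Fin.last n) = l ∧ ∀ i : Fin n, Adj (f i.castSucc) (f i.succ)}

lemma pathSet_card_le {n : ℕ} {l : YoungDiagram} {f : Fin (n+1) → YoungDiagram}
    (hf : f ∈ PathSet n l) : ∀ i : Fin (n+1), (f i).card ≤ n := by
  obtain ⟨h0, _, hadj⟩ := hf
  have key : ∀ k (hk : k < n + 1), (f ⟨k, hk⟩).card ≤ k := by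
    intro k
    induction k with
    | zero =>
      intro hk
      have : (⟨0, hk⟩ : Fin (n+1)) = 0 := rfl
      rw [this, h0]
      exact Nat.le_of_eq (card_eq_zero_iff.mpr rfl)
    | succ k ih =>
      intro hk
      have hkn : k < n := by omega
      have hadjk := hadj ⟨k, hkn⟩
      have e1 : (⟨k, hkn⟩ : Fin n).castSucc = ⟨k, by omega⟩ := rfl
      have e2 : (⟨k, hkn⟩ : Fin n).succ = ⟨k+1, hk⟩ := rfl
      rw [e1, e2] at hadjk
      have := ih (by omega)
      rcases hadjk with ⟨_, hc⟩ | ⟨_, hc⟩ <;> omega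
  intro i
  have := key i.val i.isLt
  have he : (⟨i.val, i.isLt⟩ : Fin (n+1)) = i := rfl
  rw [he] at this
  exact le_trans this (by have := i.isLt; omega)

lemma finite_PathSet (n : ℕ) (l : YoungDiagram) : (PathSet n l).Finite := by
  have hlev : {m : YoungDiagram | m.card ≤ n}.Finite := by
    have hsub : {m : YoungDiagram | m.card ≤ n} ⊆
        ⋃ c ∈ Finset.range (n+1), {m : YoungDiagram | m.card = c} := by
      intro m hm
      simp only [Set.mem_iUnion, Finset.mem_range, Set.mem_setOf_eq, exists_prop]
      have hm' : m.card ≤ n := hm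
      exact ⟨m.card, by omega, rfl⟩
    exact Set.Finite.subset
      (Set.Finite.biUnion (Finset.range (n+1)).finite_toSet fun c _ => finite_card_level c) hsub
  have hsub : PathSet n l ⊆
      Set.pi Set.univ (fun _ : Fin (n+1) => {m : YoungDiagram | m.card ≤ n}) := by
    intro f hf i _
    exact pathSet_card_le hf i
  exact Set.Finite.subset (Set.Finite.pi fun _ => hlev) hsub

lemma ncard_finset_biUnion {α β : Type*} {t : α → Set β} :
    ∀ (s : Finset α), (∀ a ∈ s, (t a).Finite) →
    (∀ a ∈ s, ∀ b ∈ s, a ≠ b → Disjoint (t a) (t b)) →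
    (⋃ a ∈ s, t a).ncard = ∑ a ∈ s, (t a).ncard := by
  classical
  intro s
  induction s using Finset.induction_on with
  | empty => intro _ _; simp
  | @insert a s ha ih =>
    intro hfin hdisj
    rw [Finset.set_biUnion_insert]
    have hfinU : (⋃ x ∈ s, t x).Finite :=
      Set.Finite.biUnion s.finite_toSet fun b hb => hfin b (Finset.mem_insert_of_mem hb)
    have hdisjU : Disjoint (t a) (⋃ x ∈ s, t x) := by
      rw [Set.disjoint_left]
      intro y hy hyU
      simp only [Set.mem_iUnion, exists_prop] at hyU
      obtain ⟨b, hb, hyb⟩ := hyU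
      have hab : a ≠ b := fun h => ha (h ▸ hb)
      exact Set.disjoint_left.mp
        (hdisj a (Finset.mem_insert_self a s) b (Finset.mem_insert_of_mem hb) hab) hy hyb
    rw [Set.ncard_union_eq hdisjU (hfin a (Finset.mem_insert_self a s)) hfinU,
      Finset.sum_insert ha,
      ih (fun b hb => hfin b (Finset.mem_insert_of_mem hb))
        (fun b hb c hc hbc =>
          hdisj b (Finset.mem_insert_of_mem hb) c (Finset.mem_insert_of_mem hc) hbc)]

def ext1 {n : ℕ} (g : Fin (n+1) → YoungDiagram) (l : YoungDiagram) :
    Fin (n+2) → YoungDiagram :=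
  Fin.snoc g l

lemma ext1_castSucc {n : ℕ} (g : Fin (n+1) → YoungDiagram) (l : YoungDiagram)
    (i : Fin (n+1)) : ext1 g l i.castSucc = g i := by
  simp [ext1]

lemma ext1_last {n : ℕ} (g : Fin (n+1) → YoungDiagram) (l : YoungDiagram) :
    ext1 g l (Fin.last (n+1)) = l := by
  simp [ext1]

lemma init_ext1 {n : ℕ} (g : Fin (n+1) → YoungDiagram) (l : YoungDiagram) :
    Fin.init (ext1 g l) = g := by
  simp [ext1, Fin.init_snoc]

lemma ext1_init {n : ℕ} (f : Fin (n+2) → YoungDiagram) :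
    ext1 (Fin.init f) (f (Fin.last (n+1))) = f := by
  simp [ext1, Fin.snoc_init_self]

lemma ext1_injective {n : ℕ} (l : YoungDiagram) :
    Function.Injective (fun g : Fin (n+1) → YoungDiagram => ext1 g l) := by
  intro g g' h
  have := congrArg Fin.init h
  simpa [init_ext1] using this

lemma pathSet_succ_decomp (n : ℕ) (l : YoungDiagram) :
    PathSet (n+1) l = ⋃ m ∈ (ups l ∪ lows l : Finset YoungDiagram),
      (fun g : Fin (n+1) → YoungDiagram => ext1 g l) '' PathSet n m := by
  ext f
  simp only [Set.mem_iUnion, exists_prop, Set.mem_image]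
  constructor
  · rintro ⟨h0, hlast, hadj⟩
    have hadjlast := hadj (Fin.last n)
    rw [Fin.succ_last, hlast] at hadjlast
    refine ⟨f ((Fin.last n).castSucc), ?_, Fin.init f, ⟨?_, ?_, ?_⟩, ?_⟩
    · rw [Finset.mem_union]
      rcases hadjlast with ⟨hle, hc⟩ | ⟨hle, hc⟩
      · exact Or.inr (mem_lows.mpr ⟨hle, hc⟩)
      · exact Or.inl (mem_ups.mpr ⟨hle, hc⟩)
    · show f (Fin.castSucc 0) = ⊥
      rw [Fin.castSucc_zero, h0]
    · rfl
    · intro j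
      show Adj (f (j.castSucc.castSucc)) (f (j.succ.castSucc))
      have hj := hadj j.castSucc
      rwa [Fin.succ_castSucc] at hj
    · rw [← hlast]
      exact ext1_init f
  · rintro ⟨m, hm, g, ⟨hg0, hglast, hgadj⟩, rfl⟩
    refine ⟨?_, ?_, ?_⟩
    · have e0 : (0 : Fin (n+2)) = (0 : Fin (n+1)).castSucc := rfl
      rw [e0, ext1_castSucc, hg0]
    · exact ext1_last _ _
    · intro i
      refine Fin.lastCases ?_ ?_ i
      · rw [Fin.succ_last, ext1_last, ext1_castSucc, hglast]
        rw [Finset.mem_union] at hm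
        rcases hm with hm | hm
        · exact Or.inr ⟨(mem_ups.mp hm).1, (mem_ups.mp hm).2⟩
        · exact Or.inl ⟨(mem_lows.mp hm).1, (mem_lows.mp hm).2⟩
      · intro j
        rw [Fin.succ_castSucc, ext1_castSucc, ext1_castSucc]
        exact hgadj j

lemma disjoint_ups_lows (l : YoungDiagram) : Disjoint (ups l) (lows l) := by
  rw [Finset.disjoint_left]
  intro m hm1 hm2
  have h1 := (mem_ups.mp hm1).2
  have h2 := (mem_lows.mp hm2).2
  omega

lemma pathSet_ncard : ∀ (n : ℕ) (l : YoungDiagram), (PathSet n l).ncard = W n l := by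
  intro n
  induction n with
  | zero =>
    intro l
    by_cases hl : l = ⊥
    · subst hl
      have hset : PathSet 0 ⊥ = {fun _ => ⊥} := by
        ext f
        simp only [PathSet, Set.mem_setOf_eq, Set.mem_singleton_iff]
        constructor
        · rintro ⟨h0, _, _⟩
          funext i
          have hi : i = 0 := Fin.ext (by omega)
          rw [hi, h0]
        · rintro rfl
          exact ⟨rfl, rfl, fun i => i.elim0⟩
      rw [hset, Set.ncard_singleton]
      show 1 = if (⊥ : YoungDiagram) = ⊥ then 1 else 0
      rw [if_pos rfl]
    · have hset : PathSet 0 l = ∅ := by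
        ext f
        simp only [PathSet, Set.mem_setOf_eq, Set.mem_empty_iff_false, iff_false]
        rintro ⟨h0, hlast, -⟩
        apply hl
        rw [← hlast, show (Fin.last 0) = 0 from rfl, h0]
      rw [hset, Set.ncard_empty]
      show 0 = if l = ⊥ then 1 else 0
      rw [if_neg hl]
  | succ n ih =>
    intro l
    rw [pathSet_succ_decomp]
    rw [ncard_finset_biUnion _
      (fun m _ => (finite_PathSet n m).image _)
      ?_]
    · have hterm : ∀ m ∈ (ups l ∪ lows l : Finset YoungDiagram),
          ((fun g : Fin (n+1) → YoungDiagram => ext1 g l) '' PathSet n m).ncard = W n m := by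
        intro m _
        rw [Set.ncard_image_of_injective _ (ext1_injective l), ih m]
      rw [Finset.sum_congr rfl hterm, Finset.sum_union (disjoint_ups_lows l)]
      rfl
    · intro a ha b hb hab
      rw [Set.disjoint_left]
      rintro f ⟨g, hg, rfl⟩ hB
      obtain ⟨g', hg', hEq⟩ := hB
      have hgg : g' = g := ext1_injective l hEq
      subst hgg
      exact hab (hg.2.1.symm.trans hg'.2.1)

end Osc

/-- Closed oscillating tableaux of length `2m`: the number of sequences
`λ⁰, λ¹, …, λ^{2m}` of Young diagrams with `λ⁰ = λ^{2m} = ∅` such that each `λ^{i+1}`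
is obtained from `λ^i` by adding or removing exactly one cell equals the
double factorial `(2m-1)!! = 1·3·5⋯(2m-1)`. -/
theorem card_closed_oscillating_tableaux (m : ℕ) :
    {f : Fin (2 * m + 1) → YoungDiagram |
        f 0 = ⊥ ∧ f (Fin.last (2 * m)) = ⊥ ∧
        ∀ i : Fin (2 * m),
          (f i.castSucc ≤ f i.succ ∧ (f i.succ).card = (f i.castSucc).card + 1) ∨
          (f i.succ ≤ f i.castSucc ∧ (f i.castSucc).card = (f i.succ).card + 1)}.ncard =
      ∏ i ∈ Finset.range m, (2 * i + 1) := by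
  have h1 : {f : Fin (2 * m + 1) → YoungDiagram |
        f 0 = ⊥ ∧ f (Fin.last (2 * m)) = ⊥ ∧
        ∀ i : Fin (2 * m),
          (f i.castSucc ≤ f i.succ ∧ (f i.succ).card = (f i.castSucc).card + 1) ∨
          (f i.succ ≤ f i.castSucc ∧ (f i.castSucc).card = (f i.succ).card + 1)} =
      Osc.PathSet (2 * m) ⊥ := rfl
  have hc : (⊥ : YoungDiagram).card = 0 := Osc.card_eq_zero_iff.mpr rfl
  rw [h1, Osc.pathSet_ncard, Osc.W_formula, hc, Nat.choose_zero_right, Nat.sub_zero,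
    Osc.F_bot, one_mul, mul_one, Osc.E_prod]
end

section
/- Let λ and κ be nonempty Young diagrams such that the set of Young diagrams obtained from λ by removing one (removable) cell equals the set of Young diagrams obtained from κ by removing one cell. If λ ≠ κ, then {λ, κ} = {(2), (1,1)}, i.e. λ and κ are the two diagrams with two cells. In particular, if |λ| ≥ 3 then λ = κ. -/
/-- The set of Young diagrams obtained from `lam` by removing one (removable) cell:
subdiagrams with exactly one fewer cell. -/
def belowSet (lam : YoungDiagram) : Set YoungDiagram :=
  {μ | μ ≤ lam ∧ μ.card + 1 = lam.card}

/-- The one-row Young diagram `(2)` with two cells. -/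
def rowTwo : YoungDiagram := YoungDiagram.ofRowLens [2] (by decide)

/-- The one-column Young diagram `(1,1)` with two cells. -/
def colTwo : YoungDiagram := YoungDiagram.ofRowLens [1, 1] (by decide)

namespace BelowSetAux

open YoungDiagram

lemma yd_ext {μ ν : YoungDiagram} (h : μ.cells = ν.cells) : μ = ν := by
  cases μ; cases ν; simpa using h

/-- A removable corner. -/
def IsCorner (lam : YoungDiagram) (c : ℕ × ℕ) : Prop :=
  c ∈ lam ∧ (c.1 + 1, c.2) ∉ lam ∧ (c.1, c.2 + 1) ∉ lam

lemma corner_above {lam : YoungDiagram} {p q : ℕ} (h : (p, q) ∈ lam) :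
    ∃ c, IsCorner lam c ∧ p ≤ c.1 ∧ q ≤ c.2 := by
  have hcol : p < lam.colLen q := mem_iff_lt_colLen.mp h
  set p' := lam.colLen q - 1 with hp'def
  have hp' : (p', q) ∈ lam := mem_iff_lt_colLen.mpr (by omega)
  have hple : p ≤ p' := by omega
  have hp'1 : (p' + 1, q) ∉ lam := by rw [mem_iff_lt_colLen]; omega
  have hrow : q < lam.rowLen p' := mem_iff_lt_rowLen.mp hp'
  set q' := lam.rowLen p' - 1 with hq'def
  have hq' : (p', q') ∈ lam := mem_iff_lt_rowLen.mpr (by omega)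
  have hqle : q ≤ q' := by omega
  refine ⟨(p', q'), ⟨hq', ?_, ?_⟩, hple, hqle⟩
  · exact fun hmem => hp'1 (lam.up_left_mem le_rfl hqle hmem)
  · show (p', q' + 1) ∉ lam
    rw [mem_iff_lt_rowLen]; omega

lemma mem_zero {lam : YoungDiagram} (h : lam ≠ ⊥) : (0, 0) ∈ lam := by
  have : lam.cells.Nonempty := by
    rw [Finset.nonempty_iff_ne_empty]
    intro hc
    exact h (yd_ext (by simp [hc]))
  obtain ⟨⟨p, q⟩, hx⟩ := this
  exact lam.up_left_mem (Nat.zero_le _) (Nat.zero_le _) hx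

/-- Erasing a corner gives a Young diagram. -/
def eraseCorner (lam : YoungDiagram) (c : ℕ × ℕ) (hc : IsCorner lam c) : YoungDiagram where
  cells := lam.cells.erase c
  isLowerSet := by
    rintro ⟨p2, q2⟩ ⟨p1, q1⟩ ⟨hp : p1 ≤ p2, hq : q1 ≤ q2⟩ hcell
    simp only [Finset.coe_erase, Set.mem_diff, Finset.mem_coe, mem_cells,
      Set.mem_singleton_iff] at hcell ⊢
    obtain ⟨hmem, hne⟩ := hcell
    refine ⟨lam.up_left_mem hp hq hmem, ?_⟩
    rintro rfl
    rcases Nat.lt_or_ge p1 p2 with h1 | h1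
    · exact hc.2.1 (lam.up_left_mem h1 hq hmem)
    · have : p1 = p2 := le_antisymm hp h1
      subst this
      rcases Nat.lt_or_ge q1 q2 with h2 | h2
      · exact hc.2.2 (lam.up_left_mem le_rfl h2 hmem)
      · exact hne (by simp [le_antisymm hq h2])

lemma eraseCorner_mem {lam : YoungDiagram} {c : ℕ × ℕ} (hc : IsCorner lam c) :
    eraseCorner lam c hc ∈ belowSet lam := by
  constructor
  · rw [← cells_subset_iff]
    exact Finset.erase_subset _ _
  · show (lam.cells.erase c).card + 1 = lam.cells.card
    rw [Finset.card_erase_of_mem ((mem_cells c).mpr hc.1)]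
    have : 0 < lam.cells.card := Finset.card_pos.mpr ⟨c, (mem_cells c).mpr hc.1⟩
    omega

/-- Key structural lemma: if `lam ≠ kap` have the same `belowSet` and cardinality,
then `lam` is a rectangle with a unique corner `c ∉ kap`, and every other cell is in `kap`. -/
lemma key (lam kap : YoungDiagram) (hlam : lam ≠ ⊥) (hne : lam ≠ kap)
    (hcard : lam.card = kap.card) (h : belowSet lam = belowSet kap) :
    ∃ c : ℕ × ℕ, (∀ p q : ℕ, (p, q) ∈ lam ↔ p ≤ c.1 ∧ q ≤ c.2) ∧ c ∉ kap ∧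
      ∀ x : ℕ × ℕ, x ∈ lam → x ≠ c → x ∈ kap := by
  set μ := lam ⊓ kap with hμdef
  -- μ is a proper subdiagram of lam
  have hμlam : μ ≠ lam := by
    intro heq
    have hle : lam ≤ kap := inf_eq_left.mp (by rw [← hμdef, heq])
    refine hne (yd_ext (Finset.eq_of_subset_of_card_le (cells_subset_iff.mpr hle) hcard.ge))
  have hμlt : μ.card < lam.card := by
    apply Finset.card_lt_card
    rw [cells_ssubset_iff]
    exact lt_of_le_of_ne inf_le_left hμlam
  -- every element of belowSet lam is μ
  have huniq : ∀ ν ∈ belowSet lam, ν = μ := by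
    intro ν hν
    have hν' : ν ∈ belowSet kap := h ▸ hν
    have hsub : ν.cells ⊆ μ.cells :=
      cells_subset_iff.mpr (le_inf hν.1 hν'.1)
    have hνcard : ν.card + 1 = lam.card := hν.2
    have h1 : μ.cells.card < lam.cells.card := hμlt
    have h2 : ν.cells.card + 1 = lam.cells.card := hνcard
    exact yd_ext (Finset.eq_of_subset_of_card_le hsub (by omega))
  -- the unique corner
  obtain ⟨c, hc, -, -⟩ := corner_above (mem_zero hlam)
  have hμc : μ.cells = lam.cells.erase c := by
    rw [← huniq _ (eraseCorner_mem hc)]; rfl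
  have hcor_uniq : ∀ d, IsCorner lam d → d = c := by
    intro d hd
    by_contra hdc
    have h2 : lam.cells.erase d = lam.cells.erase c := by
      have := congrArg YoungDiagram.cells (huniq _ (eraseCorner_mem hd))
      rw [hμc] at this; exact this
    have hmem : d ∈ lam.cells.erase c :=
      Finset.mem_erase.mpr ⟨hdc, (mem_cells d).mpr hd.1⟩
    rw [← h2] at hmem
    exact (Finset.notMem_erase d _) hmem
  refine ⟨c, ?_, ?_, ?_⟩
  · intro p q
    constructor
    · intro hpq
      obtain ⟨d, hd, hp, hq⟩ := corner_above hpq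
      rw [hcor_uniq d hd] at hp hq
      exact ⟨hp, hq⟩
    · rintro ⟨hp, hq⟩
      exact lam.up_left_mem hp hq (show (c.1, c.2) ∈ lam by simpa using hc.1)
  · intro hck
    have h1 : c ∈ μ := mem_inf.mpr ⟨hc.1, hck⟩
    have h2 : c ∈ lam.cells.erase c := hμc ▸ ((mem_cells c).mpr h1)
    exact Finset.notMem_erase c _ h2
  · intro x hx hxc
    have hmem : x ∈ lam.cells.erase c := Finset.mem_erase.mpr ⟨hxc, (mem_cells x).mpr hx⟩
    rw [← hμc] at hmem
    exact (mem_inf.mp ((mem_cells x).mp hmem)).2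

lemma mem_rowTwo (p q : ℕ) : (p, q) ∈ rowTwo ↔ p ≤ 0 ∧ q ≤ 1 := by
  rw [rowTwo, mem_ofRowLens]
  rcases p with _ | p <;> simp <;> omega

lemma mem_colTwo (p q : ℕ) : (p, q) ∈ colTwo ↔ p ≤ 1 ∧ q ≤ 0 := by
  rw [colTwo, mem_ofRowLens]
  rcases p with _ | (_ | p) <;> simp <;> omega

lemma ext2 {A B : YoungDiagram} (h : ∀ p q : ℕ, ((p, q) ∈ A ↔ (p, q) ∈ B)) : A = B :=
  yd_ext (Finset.ext fun ⟨p, q⟩ => by rw [mem_cells, mem_cells]; exact h p q)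

end BelowSetAux

open BelowSetAux in
/-- If two nonempty Young diagrams have the same set of diagrams obtained by removing
one cell, then either they are equal, or they are the two diagrams `(2)` and `(1,1)`
with two cells. In particular diagrams with at least `3` cells are determined by this set. -/
theorem belowSet_inj (lam kap : YoungDiagram) (hlam : lam ≠ ⊥) (hkap : kap ≠ ⊥)
    (h : belowSet lam = belowSet kap) :
    (lam ≠ kap → ({lam, kap} : Set YoungDiagram) = {rowTwo, colTwo}) ∧
      (3 ≤ lam.card → lam = kap) := by
  obtain ⟨c0, hc0, -, -⟩ := corner_above (mem_zero hlam)
  have hμ0 := eraseCorner_mem hc0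
  have hμ0' : eraseCorner lam c0 hc0 ∈ belowSet kap := h ▸ hμ0
  have hcard : lam.card = kap.card := by
    have e1 := hμ0.2; have e2 := hμ0'.2; omega
  have main : lam ≠ kap → ({lam, kap} : Set YoungDiagram) = {rowTwo, colTwo} := by
    intro hne
    obtain ⟨c, hrect, hck, hsub⟩ := key lam kap hlam hne hcard h
    obtain ⟨c', hrect', hck', hsub'⟩ := key kap lam hkap (Ne.symm hne) hcard.symm h.symm
    have hcmem : c ∈ lam := by
      have := (hrect c.1 c.2).mpr ⟨le_rfl, le_rfl⟩; simpa using this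
    have hc'mem : c' ∈ kap := by
      have := (hrect' c'.1 c'.2).mpr ⟨le_rfl, le_rfl⟩; simpa using this
    have hcc' : c ≠ c' := by
      rintro rfl
      exact hne (ext2 fun p q => by rw [hrect, hrect'])
    -- the two "incomparability" facts
    have e1 : ¬(c.1 ≤ c'.1 ∧ c.2 ≤ c'.2) := fun hx =>
      hck (by simpa using (hrect' c.1 c.2).mpr hx)
    have e2 : ¬(c'.1 ≤ c.1 ∧ c'.2 ≤ c.2) := fun hx =>
      hck' (by simpa using (hrect c'.1 c'.2).mpr hx)
    -- c ≠ (0,0) and c' ≠ (0,0)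
    have hc00 : ¬(c.1 = 0 ∧ c.2 = 0) := by
      rintro ⟨h1, h2⟩
      have hl1 : lam.cells = {(0, 0)} := by
        ext ⟨p, q⟩
        rw [Finset.mem_singleton, YoungDiagram.mem_cells, hrect, h1, h2, Prod.ext_iff]
        omega
      have hlc : lam.card = 1 := by show lam.cells.card = 1; rw [hl1]; rfl
      have hkc : kap.cells.card ≤ 1 := by
        show kap.card ≤ 1; omega
      have := Finset.card_le_one.mp hkc c' ((YoungDiagram.mem_cells c').mpr hc'mem)
        (0, 0) ((YoungDiagram.mem_cells _).mpr (mem_zero hkap))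
      rw [this] at hcc'
      exact hcc' (Prod.ext h1 h2)
    have hc'00 : ¬(c'.1 = 0 ∧ c'.2 = 0) := by
      rintro ⟨h1, h2⟩
      exact e2 (by omega)
    -- one coordinate of c is zero
    have hrow : c.1 = 0 ∨ c.2 = 0 := by
      by_contra hcon
      push_neg at hcon
      obtain ⟨h1, h2⟩ := hcon
      have m1 : (c.1 - 1, c.2) ∈ kap :=
        hsub _ ((hrect _ _).mpr ⟨by omega, le_rfl⟩) (by rw [Ne, Prod.ext_iff]; omega)
      have m2 : (c.1, c.2 - 1) ∈ kap :=
        hsub _ ((hrect _ _).mpr ⟨le_rfl, by omega⟩) (by rw [Ne, Prod.ext_iff]; omega)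
      have g1 := (hrect' _ _).mp m1
      have g2 := (hrect' _ _).mp m2
      exact e1 ⟨by omega, by omega⟩
    have hrow' : c'.1 = 0 ∨ c'.2 = 0 := by
      by_contra hcon
      push_neg at hcon
      obtain ⟨h1, h2⟩ := hcon
      have m1 : (c'.1 - 1, c'.2) ∈ lam :=
        hsub' _ ((hrect' _ _).mpr ⟨by omega, le_rfl⟩) (by rw [Ne, Prod.ext_iff]; omega)
      have m2 : (c'.1, c'.2 - 1) ∈ lam :=
        hsub' _ ((hrect' _ _).mpr ⟨le_rfl, by omega⟩) (by rw [Ne, Prod.ext_iff]; omega)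
      have g1 := (hrect _ _).mp m1
      have g2 := (hrect _ _).mp m2
      exact e2 ⟨by omega, by omega⟩
    rcases hrow with ha | hb
    · -- lam is a single row, so kap is a single column
      have hb' : c'.2 = 0 := by
        rcases hrow' with ha' | hb'
        · exact absurd ⟨le_of_eq (ha.trans ha'.symm), by omega⟩ e1
        · exact hb'
      have ha' : 1 ≤ c'.1 := by omega
      have hb1 : c.2 = 1 := by
        rcases Nat.lt_or_ge c.2 2 with hlt | hge
        · omega
        · exfalso
          have m : (0, 1) ∈ kap :=
            hsub _ ((hrect _ _).mpr ⟨by omega, by omega⟩) (by rw [Ne, Prod.ext_iff]; omega)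
          have := (hrect' _ _).mp m
          omega
      have ha1 : c'.1 = 1 := by
        rcases Nat.lt_or_ge c'.1 2 with hlt | hge
        · omega
        · exfalso
          have m : (1, 0) ∈ lam :=
            hsub' _ ((hrect' _ _).mpr ⟨by omega, by omega⟩) (by rw [Ne, Prod.ext_iff]; omega)
          have := (hrect _ _).mp m
          omega
      have hl : lam = rowTwo := ext2 fun p q => by rw [hrect, mem_rowTwo, ha, hb1]
      have hk : kap = colTwo := ext2 fun p q => by rw [hrect', mem_colTwo, ha1, hb']
      rw [hl, hk]
    · -- lam is a single column, so kap is a single row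
      have ha2 : 1 ≤ c.1 := by omega
      have ha' : c'.1 = 0 := by
        rcases hrow' with ha' | hb'
        · exact ha'
        · exact absurd ⟨by omega, le_of_eq (hb'.trans hb.symm)⟩ e2
      have hb'1 : 1 ≤ c'.2 := by omega
      have ha1 : c.1 = 1 := by
        rcases Nat.lt_or_ge c.1 2 with hlt | hge
        · omega
        · exfalso
          have m : (1, 0) ∈ kap :=
            hsub _ ((hrect _ _).mpr ⟨by omega, by omega⟩) (by rw [Ne, Prod.ext_iff]; omega)
          have := (hrect' _ _).mp m
          omega
      have hb1 : c'.2 = 1 := by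
        rcases Nat.lt_or_ge c'.2 2 with hlt | hge
        · omega
        · exfalso
          have m : (0, 1) ∈ lam :=
            hsub' _ ((hrect' _ _).mpr ⟨by omega, by omega⟩) (by rw [Ne, Prod.ext_iff]; omega)
          have := (hrect _ _).mp m
          omega
      have hl : lam = colTwo := ext2 fun p q => by rw [hrect, mem_colTwo, ha1, hb]
      have hk : kap = rowTwo := ext2 fun p q => by rw [hrect', mem_rowTwo, ha', hb1]
      rw [hl, hk, Set.pair_comm]
  refine ⟨main, fun h3 => ?_⟩
  by_contra hne
  have hp := main hne
  have hmem : lam ∈ ({rowTwo, colTwo} : Set YoungDiagram) := by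
    rw [← hp]; exact Set.mem_insert _ _
  have hcard2 : lam.card = 2 := by
    rcases hmem with rfl | rfl
    · rfl
    · rfl
  omega
end

section
/- For every Young diagram λ, the sum of the contents of the addable corners of λ equals the sum of the contents of the removable corners of λ. -/
/-- A position `c` is an addable corner of the Young diagram `μ` if `c ∉ μ` and
adding `c` to `μ` yields a Young diagram. -/
def IsAddable (μ : YoungDiagram) (c : ℕ × ℕ) : Prop :=
  c ∉ μ ∧ ∃ ν : YoungDiagram, ν.cells = insert c μ.cells

/-- A cell `c` is a removable corner of the Young diagram `μ` if `c ∈ μ` and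
removing `c` from `μ` yields a Young diagram. -/
def IsRemovable (μ : YoungDiagram) (c : ℕ × ℕ) : Prop :=
  c ∈ μ ∧ ∃ ν : YoungDiagram, ν.cells = μ.cells.erase c

/-- The content `j - i` of the cell `c = (i, j)`. -/
def content (c : ℕ × ℕ) : ℤ :=
  (c.2 : ℤ) - (c.1 : ℤ)

lemma addable_iff (μ : YoungDiagram) (i j : ℕ) :
    IsAddable μ (i, j) ↔ j = μ.rowLen i ∧ (i = 0 ∨ μ.rowLen i < μ.rowLen (i - 1)) := by
  constructor
  · rintro ⟨hc, ν, hν⟩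
    have hmemν : ∀ x : ℕ × ℕ, x ∈ ν ↔ x = (i, j) ∨ x ∈ μ := by
      intro x
      rw [← YoungDiagram.mem_cells, hν, Finset.mem_insert]; rfl
    have hij : (i, j) ∈ ν := (hmemν _).mpr (Or.inl rfl)
    have hle : μ.rowLen i ≤ j := by
      by_contra h
      exact hc (YoungDiagram.mem_iff_lt_rowLen.mpr (Nat.lt_of_not_le h))
    have hge : j ≤ μ.rowLen i := by
      by_contra h
      have hj' : (i, μ.rowLen i) ∈ ν :=
        ν.up_left_mem le_rfl (le_of_lt (Nat.lt_of_not_le h)) hij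
      rcases (hmemν _).mp hj' with h1 | h1
      · exact Nat.lt_irrefl j (by
          have := (Prod.mk.injEq _ _ _ _).mp h1
          omega)
      · exact absurd (YoungDiagram.mem_iff_lt_rowLen.mp h1) (lt_irrefl _)
    refine ⟨le_antisymm hge hle, ?_⟩
    rcases Nat.eq_zero_or_pos i with h0 | h0
    · exact Or.inl h0
    · right
      have hup : (i - 1, j) ∈ ν := ν.up_left_mem (Nat.sub_le _ _) le_rfl hij
      rcases (hmemν _).mp hup with h1 | h1
      · have := (Prod.mk.injEq _ _ _ _).mp h1; omega
      · have := YoungDiagram.mem_iff_lt_rowLen.mp h1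
        omega
  · rintro ⟨hj, hcond⟩
    have hc : (i, j) ∉ μ := by
      rw [YoungDiagram.mem_iff_lt_rowLen]; omega
    refine ⟨hc, ⟨insert (i, j) μ.cells, ?_⟩, rfl⟩
    intro y x hxy hy
    simp only [Finset.coe_insert, Set.mem_insert_iff, Finset.mem_coe,
      YoungDiagram.mem_cells] at hy ⊢
    rcases hy with rfl | hy
    · obtain ⟨a, b⟩ := x
      have ha : a ≤ i := hxy.1
      have hb : b ≤ j := hxy.2
      by_cases hab : a = i ∧ b = j
      · left; rw [hab.1, hab.2]
      · right
        rw [YoungDiagram.mem_iff_lt_rowLen]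
        rcases Nat.lt_or_ge b j with hbj | hbj
        · have : μ.rowLen i ≤ μ.rowLen a := μ.rowLen_anti a i ha
          omega
        · have hbj' : b = j := le_antisymm hb hbj
          have hai : a < i := by
            rcases Nat.lt_or_ge a i with h | h
            · exact h
            · exact absurd ⟨le_antisymm ha h, hbj'⟩ hab
          have hi0 : i ≠ 0 := by omega
          have hcond' : μ.rowLen i < μ.rowLen (i - 1) := hcond.resolve_left hi0
          have : μ.rowLen (i - 1) ≤ μ.rowLen a := μ.rowLen_anti a (i - 1) (by omega)
          omega
    · exact Or.inr (μ.isLowerSet hxy hy)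

lemma removable_iff (μ : YoungDiagram) (i j : ℕ) :
    IsRemovable μ (i, j) ↔ j + 1 = μ.rowLen i ∧ μ.rowLen (i + 1) ≤ j := by
  constructor
  · rintro ⟨hc, ν, hν⟩
    have hmemν : ∀ x : ℕ × ℕ, x ∈ ν ↔ x ∈ μ ∧ x ≠ (i, j) := by
      intro x
      rw [← YoungDiagram.mem_cells, hν, Finset.mem_erase]
      tauto
    have hlt : j < μ.rowLen i := YoungDiagram.mem_iff_lt_rowLen.mp hc
    have h1 : (i, j + 1) ∉ μ := by
      intro h
      have : (i, j + 1) ∈ ν := (hmemν _).mpr ⟨h, by simp⟩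
      have : (i, j) ∈ ν := ν.up_left_mem le_rfl (by omega) this
      exact ((hmemν _).mp this).2 rfl
    have h2 : (i + 1, j) ∉ μ := by
      intro h
      have : (i + 1, j) ∈ ν := (hmemν _).mpr ⟨h, by simp⟩
      have : (i, j) ∈ ν := ν.up_left_mem (by omega) le_rfl this
      exact ((hmemν _).mp this).2 rfl
    rw [YoungDiagram.mem_iff_lt_rowLen] at h1 h2
    constructor <;> omega
  · rintro ⟨hj, hnext⟩
    have hc : (i, j) ∈ μ := YoungDiagram.mem_iff_lt_rowLen.mpr (by omega)
    refine ⟨hc, ⟨μ.cells.erase (i, j), ?_⟩, rfl⟩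
    intro y x hxy hy
    simp only [Finset.coe_erase, Set.mem_diff, Finset.mem_coe, YoungDiagram.mem_cells,
      Set.mem_singleton_iff] at hy ⊢
    refine ⟨μ.isLowerSet hxy hy.1, ?_⟩
    rintro rfl
    obtain ⟨a, b⟩ := y
    have ha : i ≤ a := hxy.1
    have hb : j ≤ b := hxy.2
    have hmem := YoungDiagram.mem_iff_lt_rowLen.mp hy.1
    have hra : μ.rowLen a ≤ μ.rowLen i := μ.rowLen_anti i a ha
    have hai : a = i := by
      rcases Nat.lt_or_ge a (i + 1) with h | h
      · omega
      · have : μ.rowLen a ≤ μ.rowLen (i + 1) := μ.rowLen_anti (i + 1) a h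
        omega
    have hbj : b = j := by omega
    exact hy.2 (by rw [hai, hbj])

lemma rowLen_eq_zero_of_le {μ : YoungDiagram} {i : ℕ} (h : μ.colLen 0 ≤ i) :
    μ.rowLen i = 0 := by
  by_contra hpos
  have : (i, 0) ∈ μ := YoungDiagram.mem_iff_lt_rowLen.mpr (by omega)
  have := YoungDiagram.mem_iff_lt_colLen.mp this
  omega

/-- For any Young diagram, the sum of the contents of the addable corners equals the
sum of the contents of the removable corners. -/
theorem sum_content_addable_eq_sum_content_removable (μ : YoungDiagram) :
    ∑ᶠ c ∈ {c : ℕ × ℕ | IsAddable μ c}, content c =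
      ∑ᶠ c ∈ {c : ℕ × ℕ | IsRemovable μ c}, content c := by
  have hAset : {c : ℕ × ℕ | IsAddable μ c} =
      ↑(((Finset.range (μ.colLen 0 + 1)).filter
          (fun i => i = 0 ∨ μ.rowLen i < μ.rowLen (i - 1))).image
            (fun i => (i, μ.rowLen i))) := by
    ext ⟨i, j⟩
    simp only [Set.mem_setOf_eq, Finset.coe_image, Set.mem_image, Finset.mem_coe,
      Finset.mem_filter, Finset.mem_range, addable_iff]
    constructor
    · rintro ⟨rfl, hcond⟩
      refine ⟨i, ⟨?_, hcond⟩, rfl⟩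
      by_contra h
      have h1 : μ.colLen 0 ≤ i - 1 := by omega
      have h2 : μ.rowLen (i - 1) = 0 := rowLen_eq_zero_of_le h1
      rcases hcond with h | h <;> omega
    · rintro ⟨a, ⟨_, hcond⟩, heq⟩
      obtain ⟨ha, hj⟩ := Prod.mk.injEq _ _ _ _ ▸ heq
      subst ha; subst hj
      exact ⟨rfl, hcond⟩
  have hRset : {c : ℕ × ℕ | IsRemovable μ c} =
      ↑(((Finset.range (μ.colLen 0)).filter
          (fun i => μ.rowLen (i + 1) < μ.rowLen i)).image
            (fun i => (i, μ.rowLen i - 1))) := by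
    ext ⟨i, j⟩
    simp only [Set.mem_setOf_eq, Finset.coe_image, Set.mem_image, Finset.mem_coe,
      Finset.mem_filter, Finset.mem_range, removable_iff]
    constructor
    · rintro ⟨hj, hnext⟩
      refine ⟨i, ⟨?_, by omega⟩, by simp; omega⟩
      by_contra h
      have h2 : μ.rowLen i = 0 := rowLen_eq_zero_of_le (by omega)
      omega
    · rintro ⟨a, ⟨ha, hcond⟩, heq⟩
      obtain ⟨ha2, hj⟩ := Prod.mk.injEq _ _ _ _ ▸ heq
      subst ha2; subst hj
      constructor <;> omega
  rw [hAset, hRset, finsum_mem_coe_finset, finsum_mem_coe_finset,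
    Finset.sum_image (by intro a _ b _ h; exact ((Prod.mk.injEq _ _ _ _).mp h).1),
    Finset.sum_image (by intro a _ b _ h; exact ((Prod.mk.injEq _ _ _ _).mp h).1),
    Finset.sum_filter, Finset.sum_filter]
  have hanti : ∀ i, μ.rowLen (i + 1) ≤ μ.rowLen i := fun i => μ.rowLen_anti i (i + 1) (by omega)
  have hlamn : μ.rowLen (μ.colLen 0) = 0 := rowLen_eq_zero_of_le le_rfl
  rw [Finset.sum_range_succ']
  simp only [content]
  rw [if_pos (Or.inl trivial)]
  have hterm : ∀ i ∈ Finset.range (μ.colLen 0),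
      (if i + 1 = 0 ∨ μ.rowLen (i + 1) < μ.rowLen (i + 1 - 1) then
          ((μ.rowLen (i + 1) : ℤ) - ((i + 1 : ℕ) : ℤ)) else 0)
      - (if μ.rowLen (i + 1) < μ.rowLen i then
          (((μ.rowLen i - 1 : ℕ) : ℤ) - (i : ℤ)) else 0)
      = (μ.rowLen (i + 1) : ℤ) - (μ.rowLen i : ℤ) := by
    intro i _
    by_cases h : μ.rowLen (i + 1) < μ.rowLen i
    · have h1 : (1 : ℕ) ≤ μ.rowLen i := by omega
      simp only [Nat.add_sub_cancel, h, if_true, Nat.succ_ne_zero, false_or]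
      push_cast [h1]
      ring
    · have he : μ.rowLen (i + 1) = μ.rowLen i := le_antisymm (hanti i) (by omega)
      simp only [Nat.add_sub_cancel, h, if_false, Nat.succ_ne_zero, false_or]
      omega
  have hsub : ∑ i ∈ Finset.range (μ.colLen 0),
      (if i + 1 = 0 ∨ μ.rowLen (i + 1) < μ.rowLen (i + 1 - 1) then
          ((μ.rowLen (i + 1) : ℤ) - ((i + 1 : ℕ) : ℤ)) else 0)
      - ∑ i ∈ Finset.range (μ.colLen 0),
      (if μ.rowLen (i + 1) < μ.rowLen i then
          (((μ.rowLen i - 1 : ℕ) : ℤ) - (i : ℤ)) else 0)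
      = ∑ i ∈ Finset.range (μ.colLen 0), ((μ.rowLen (i + 1) : ℤ) - (μ.rowLen i : ℤ)) := by
    rw [← Finset.sum_sub_distrib]
    exact Finset.sum_congr rfl hterm
  have htel : ∑ i ∈ Finset.range (μ.colLen 0), ((μ.rowLen (i + 1) : ℤ) - (μ.rowLen i : ℤ)) =
      (μ.rowLen (μ.colLen 0) : ℤ) - (μ.rowLen 0 : ℤ) :=
    Finset.sum_range_sub (fun i => (μ.rowLen i : ℤ)) (μ.colLen 0)
  rw [htel, hlamn] at hsub
  push_cast at hsub ⊢
  linarith [hsub]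
end

section
/- Let δ, A, B, C, D, E, F, G be complex numbers with δ ≠ 0 and G ≠ 0, satisfying the equations: F·G = −G·F; F·F = −1 − G²; F·F = E − G·D; F·E = −A; F·E = F − G·C; F·E = F + G·C; F·D = −G·B; F·D = C + G·F; F·D = −C + G·F; F·C = D + G·E; F·C = −D − G·E; F·C = −1/δ + E/δ − G·D/δ − G²/δ; F·B = 1/δ² + G·D; F·A = −E + G²/δ². Then F = 0, G² = −1, A = 0, B = 0, C = 0, E = −1/δ², and D = −1/(G·δ²). -/
/-! Anticommutation `F G = -G F` with `G ≠ 0` forces `F = 0`, after which every equation is linear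
in the remaining unknowns and can be read off one at a time, using `G ≠ 0` to cancel `G`. -/

theorem eq_zero_of_mul_eq_neg_mul_swap {R : Type*} [CommRing R] [NoZeroDivisors R]
    [IsAddTorsionFree R] {a b : R} (hb : b ≠ 0) (h : a * b = -(b * a)) : a = 0 := by
  rw [mul_comm b, self_eq_neg] at h
  exact (mul_eq_zero.1 h).resolve_right hb

theorem yb_coefficients_nonself_general (δ A B C D E F G : ℂ)
    (hG : G ≠ 0)
    (h16 : F * G = -(G * F))
    (h13 : F * F = -1 - G ^ 2)
    (h12 : F * F = E - G * D)
    (h10 : F * E = -A)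
    (h9 : F * E = F - G * C)
    (h11 : F * E = F + G * C)
    (h7 : F * D = -(G * B))
    (h2 : F * B = 1 / δ ^ 2 + G * D) :
    F = 0 ∧ G ^ 2 = -1 ∧ A = 0 ∧ B = 0 ∧ C = 0 ∧
      E = -(1 / δ ^ 2) ∧ D = -(1 / (G * δ ^ 2)) := by
  obtain rfl : F = 0 := eq_zero_of_mul_eq_neg_mul_swap hG h16
  have hB : B = 0 := (mul_eq_zero.1 (by linear_combination h7 : G * B = 0)).resolve_left hG
  have hC : C = 0 := by
    have hGC : G * C = -(G * C) := by linear_combination h9 - h11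
    exact (mul_eq_zero.1 (self_eq_neg.1 hGC)).resolve_left hG
  have hGD : G * D = -(1 / δ ^ 2) := by linear_combination -h2
  refine ⟨rfl, by linear_combination h13, by linear_combination h10, hB, hC,
    by linear_combination hGD - h12, ?_⟩
  calc D = -(1 / δ ^ 2) / G := eq_div_of_mul_eq hG (by rw [mul_comm, hGD])
    _ = -(1 / (G * δ ^ 2)) := by rw [neg_div, div_div, mul_comm]

/-- Solving the coefficient-comparison system for the Yang–Baxter relation of a
singly-generated planar algebra with non-self-contragredient generator. -/
theorem yb_coefficients_nonself (δ A B C D E F G : ℂ)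
    (hδ : δ ≠ 0) (hG : G ≠ 0)
    (h16 : F * G = -(G * F))
    (h13 : F * F = -1 - G ^ 2)
    (h12 : F * F = E - G * D)
    (h10 : F * E = -A)
    (h9 : F * E = F - G * C)
    (h11 : F * E = F + G * C)
    (h7 : F * D = -(G * B))
    (h6 : F * D = C + G * F)
    (h8 : F * D = -C + G * F)
    (h3 : F * C = D + G * E)
    (h5 : F * C = -D - G * E)
    (h4 : F * C = -1 / δ + E / δ - G * D / δ - G ^ 2 / δ)
    (h2 : F * B = 1 / δ ^ 2 + G * D)
    (h1 : F * A = -E + G ^ 2 / δ ^ 2) :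
    F = 0 ∧ G ^ 2 = -1 ∧ A = 0 ∧ B = 0 ∧ C = 0 ∧
      E = -(1 / δ ^ 2) ∧ D = -(1 / (G * δ ^ 2)) :=
  yb_coefficients_nonself_general δ A B C D E F G hG h16 h13 h12 h10 h9 h11 h7 h2
end

section
/- Let a₁, a₂, a₃, b₁, b₂, b₃, δ be complex numbers with a₃ ≠ 0, b₃ ≠ 0, δ ≠ 0, satisfying: i·a₃²·b₃ = a₃·b₃²; a₁·a₃·b₃ = a₃·b₁·b₃; −a₃²·b₂ = a₂·b₃²; a₃²·b₃/δ² + a₁·a₃·b₂ = a₂·b₂·b₃ + a₃·b₁·b₂; and a₃²·b₃/δ² − a₁²·b₃ = −2·a₁·b₁·b₃. Then b₃ = i·a₃, a₁ = b₁, a₂ = b₂, a₁² = −a₃²/δ², and a₂² = a₃²/δ². -/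
open Complex

/-- The coefficient equations obtained from the Yang–Baxter equation `ABA = BAB`
in the planar algebra `𝒞` determine the coefficients of the solution. -/
theorem yb_equation_coefficients (a₁ a₂ a₃ b₁ b₂ b₃ δ : ℂ)
    (ha₃ : a₃ ≠ 0) (hb₃ : b₃ ≠ 0) (hδ : δ ≠ 0)
    (h16 : Complex.I * a₃ ^ 2 * b₃ = a₃ * b₃ ^ 2)
    (h14 : a₁ * a₃ * b₃ = a₃ * b₁ * b₃)
    (h12 : -(a₃ ^ 2 * b₂) = a₂ * b₃ ^ 2)
    (h11 : a₃ ^ 2 * b₃ / δ ^ 2 + a₁ * a₃ * b₂ = a₂ * b₂ * b₃ + a₃ * b₁ * b₂)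
    (h9 : a₃ ^ 2 * b₃ / δ ^ 2 - a₁ ^ 2 * b₃ = -(2 * (a₁ * b₁ * b₃))) :
    b₃ = Complex.I * a₃ ∧ a₁ = b₁ ∧ a₂ = b₂ ∧
      a₁ ^ 2 = -(a₃ ^ 2 / δ ^ 2) ∧ a₂ ^ 2 = a₃ ^ 2 / δ ^ 2 := by
  have hab : a₃ * b₃ ≠ 0 := mul_ne_zero ha₃ hb₃
  have hB : b₃ = Complex.I * a₃ := by
    have h : (b₃ - Complex.I * a₃) * (a₃ * b₃) = 0 := by linear_combination -h16
    rcases mul_eq_zero.1 h with h | h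
    · exact sub_eq_zero.1 h
    · exact absurd h hab
  have hA : a₁ = b₁ := by
    have h : (a₁ - b₁) * (a₃ * b₃) = 0 := by linear_combination h14
    rcases mul_eq_zero.1 h with h | h
    · exact sub_eq_zero.1 h
    · exact absurd h hab
  have hC : a₂ = b₂ := by
    have h : (a₂ - b₂) * a₃ ^ 2 = 0 := by
      rw [hB] at h12
      linear_combination h12 + a₂ * a₃ ^ 2 * Complex.I_sq
    rcases mul_eq_zero.1 h with h | h
    · exact sub_eq_zero.1 h
    · exact absurd h (pow_ne_zero 2 ha₃)
  have h1 : a₁ ^ 2 = -(a₃ ^ 2 / δ ^ 2) := by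
    have h : (a₁ ^ 2 + a₃ ^ 2 / δ ^ 2) * b₃ = 0 := by
      linear_combination h9 + (2 * a₁ * b₃) * hA
    rcases mul_eq_zero.1 h with h | h
    · linear_combination h
    · exact absurd h hb₃
  refine ⟨hB, hA, hC, h1, ?_⟩
  have h : (a₂ ^ 2 - a₃ ^ 2 / δ ^ 2) * b₃ = 0 := by
    linear_combination -h11 + (a₃ * b₂) * hA + (a₂ * b₃) * hC
  rcases mul_eq_zero.1 h with h | h
  · linear_combination h
  · exact absurd h hb₃
end

section
/- Let q be transcendental over ℚ (or work in the field ℂ(q) of rational functions), let μ be a Young diagram, let c₀ be an addable corner of μ with content k, and set λ = μ ∪ {c₀}. Define f(n) = i·(qⁿ + q⁻ⁿ)/(qⁿ − q⁻ⁿ) for positive integers n. Then ∏_{c∈λ} f(h_λ(c)) = ∏_{c∈μ} f(h_μ(c)) · f(1) · ∏_{a} (q^{2k} + q^{2a})/(q^{2k} − q^{2a}) · ∏_{b} (q^{2k} − q^{2b})/(q^{2k} + q^{2b}), where the first product runs over the contents a of the addable corners of μ other than c₀, and the second over the contents b of the removable corners of μ. -/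
open Classical in
/-- The Young diagram obtained by adding the cell `c` to `μ` (equal to `μ` if the
result would not be a Young diagram). -/
noncomputable def addCell (μ : YoungDiagram) (c : ℕ × ℕ) : YoungDiagram :=
  if h : ∃ ν : YoungDiagram, ν.cells = insert c μ.cells then h.choose else μ

/-- The hook-length factor `i (qⁿ + q⁻ⁿ)/(qⁿ - q⁻ⁿ)`. -/
noncomputable def hookFactor (q : ℂ) (n : ℕ) : ℂ :=
  Complex.I * (q ^ (n : ℤ) + q ^ (-(n : ℤ))) / (q ^ (n : ℤ) - q ^ (-(n : ℤ)))

/-!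
Adding the corner `c₀ = (r, s)` raises by one exactly the hook lengths of the cells left of it
in row `r` and above it in column `s`, so the two hook products differ by `f 1` and the factors
`f (h + 1) / f h` over these cells. Write `f n = i · qCoth n`, `qCoth n = (qⁿ + q⁻ⁿ)/(qⁿ - q⁻ⁿ)`.
The row part telescopes: along a run of columns of equal length, the denominator `qCoth h` of
one cell cancels the numerator `qCoth (h + 1)` of its right neighbour. What survives are the
numerators `qCoth (k - a)` at the addable corners and the denominators `qCoth (k - b)` at the
removable corners left of `c₀`. The column part is the row part of the transposed diagram, in
which contents change sign; `qCoth` is odd, so each ratio is unchanged. Since `q` is not a root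
of unity, no `qCoth n` with `n ≠ 0` vanishes. Finally
`qCoth (k - a) = (q^{2k} + q^{2a})/(q^{2k} - q^{2a})`.
-/

open Finset

section QCoth

variable {K : Type*} [Field K]

noncomputable def qCoth (q : K) (n : ℤ) : K :=
  (q ^ n + q ^ (-n)) / (q ^ n - q ^ (-n))

theorem qCoth_neg (q : K) (n : ℤ) : qCoth q (-n) = -qCoth q n := by
  rw [qCoth, qCoth, neg_neg, add_comm, ← neg_sub, div_neg]

theorem qCoth_sub {q : K} (hq : q ≠ 0) (a b : ℤ) :
    qCoth q (a - b) = (q ^ (2 * a) + q ^ (2 * b)) / (q ^ (2 * a) - q ^ (2 * b)) := by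
  have e : ∀ m n : ℤ, q ^ m * q ^ n = q ^ (m + n) := fun m n => (zpow_add₀ hq m n).symm
  rw [qCoth, ← mul_div_mul_left _ _ (zpow_ne_zero (a + b) hq), mul_add, mul_sub, e, e]
  ring_nf

theorem qCoth_ne_zero {q : K} (hq₀ : q ≠ 0) (hq : ¬IsOfFinOrder q) {n : ℕ} (hn : 0 < n) :
    qCoth q n ≠ 0 := by
  have hpow : ∀ m, 0 < m → q ^ m ≠ 1 := fun m hm h =>
    hq (isOfFinOrder_iff_pow_eq_one.2 ⟨m, hm, h⟩)
  rw [← sub_zero (n : ℤ), qCoth_sub hq₀, mul_zero, zpow_zero,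
    show (2 * n : ℤ) = (2 * n : ℕ) by norm_cast, zpow_natCast]
  refine div_ne_zero (fun h => hpow (4 * n) (by omega) ?_) (sub_ne_zero.2 (hpow _ (by omega)))
  rw [show 4 * n = 2 * n * 2 by ring, pow_mul, eq_neg_of_add_eq_zero_left h]
  norm_num

end QCoth

theorem hookFactor_eq_mul_qCoth (q : ℂ) (n : ℕ) : hookFactor q n = Complex.I * qCoth q n :=
  mul_div_assoc _ _ _

theorem Transcendental.not_isOfFinOrder {R A : Type*} [CommRing R] [Nontrivial R] [Ring A]
    [Algebra R A] {q : A} (hq : Transcendental R q) : ¬IsOfFinOrder q := fun h => by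
  obtain ⟨n, hn, h⟩ := isOfFinOrder_iff_pow_eq_one.1 h
  exact hq.pow hn (h ▸ isAlgebraic_one)

theorem prod_range_mul_prod_descents {M : Type*} [CommMonoid M] (φ : ℤ → M) (c : ℕ → ℕ)
    {s : ℕ} (hc : ∀ j < s, c (j + 1) ≤ c j) (hs : 0 < s → c s < c (s - 1)) :
    (∏ j ∈ range s, φ (j - c j)) * ∏ j ∈ range s with c (j + 1) < c j, φ (j - c j + 1) =
      (∏ j ∈ range s, φ (j - c j + 1)) *
        ∏ j ∈ range s with j = 0 ∨ c j < c (j - 1), φ (j - c j) := by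
  -- `P j` is the factor `φ (j - c j)` when it cancels against column `j - 1`, i.e. when
  -- `c j = c (j - 1)`; after splitting it off, both sides contain `∏ P` once.
  set P : ℕ → M := fun j => if j = 0 ∨ c j < c (j - 1) then 1 else φ (j - c j)
  have hN : ∀ j, φ (j - c j) = (if j = 0 ∨ c j < c (j - 1) then φ (j - c j) else 1) * P j := by
    intro j
    simp only [P]
    split_ifs <;> simp
  have hD : ∀ j < s,
      φ (j - c j + 1) = (if c (j + 1) < c j then φ (j - c j + 1) else 1) * P (j + 1) := by
    intro j hj
    by_cases hlt : c (j + 1) < c j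
    · simp [P, hlt]
    · have heq : c (j + 1) = c j := le_antisymm (hc j hj) (not_lt.1 hlt)
      simp only [P, if_false, one_mul, Nat.add_sub_cancel, heq, lt_irrefl, or_false,
        Nat.add_one_ne_zero]
      congr 1
      push_cast
      ring
  have hP : ∏ j ∈ range s, P j = ∏ j ∈ range s, P (j + 1) := by
    have h₀ : P 0 = 1 := if_pos (Or.inl rfl)
    have hPs : P s = 1 := by
      rcases Nat.eq_zero_or_pos s with rfl | hs₀
      · exact h₀
      · exact if_pos (Or.inr (hs hs₀))
    calc ∏ j ∈ range s, P j = ∏ j ∈ range (s + 1), P j := by rw [prod_range_succ, hPs, mul_one]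
      _ = ∏ j ∈ range s, P (j + 1) := by rw [prod_range_succ', h₀, mul_one]
  rw [prod_filter, prod_filter, prod_congr rfl fun j _ => hN j, prod_mul_distrib, hP,
    prod_congr rfl fun j hj => hD j (mem_range.1 hj), prod_mul_distrib]
  ac_rfl

theorem prod_range_div_eq_descents {M : Type*} [CommGroupWithZero M] (φ : ℤ → M) (c : ℕ → ℕ)
    {s : ℕ} (hc : ∀ j < s, c (j + 1) ≤ c j) (hs : 0 < s → c s < c (s - 1))
    (hφ : ∀ j < s, φ (j - c j + 1) ≠ 0) :
    ∏ j ∈ range s, φ (j - c j) / φ (j - c j + 1) =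
      (∏ j ∈ range s with j = 0 ∨ c j < c (j - 1), φ (j - c j)) /
        ∏ j ∈ range s with c (j + 1) < c j, φ (j - c j + 1) := by
  rw [prod_div_distrib, div_eq_div_iff (prod_ne_zero_iff.2 fun j hj => hφ j (mem_range.1 hj))
    (prod_ne_zero_iff.2 fun j hj => hφ j (mem_range.1 (mem_filter.1 hj).1)),
    mul_comm (∏ j ∈ _ with _, _)]
  exact prod_range_mul_prod_descents φ c hc hs

theorem finprod_mem_preimage_swap {α β M : Type*} [CommMonoid M] (s : Set (α × β))
    (f : β × α → M) : ∏ᶠ c ∈ Prod.swap ⁻¹' s, f c = ∏ᶠ c ∈ s, f c.swap := by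
  rw [← Set.image_swap_eq_preimage_swap, finprod_mem_image Prod.swap_injective.injOn]

namespace YoungDiagram

variable {μ : YoungDiagram}

theorem lt_rowLen_iff_lt_colLen {i j : ℕ} : j < μ.rowLen i ↔ i < μ.colLen j :=
  mem_iff_lt_rowLen.symm.trans mem_iff_lt_colLen

theorem rowLen_eq_iff {i j : ℕ} :
    μ.rowLen i = j ↔ μ.colLen j ≤ i ∧ (j = 0 ∨ i < μ.colLen (j - 1)) := by
  have h₁ := lt_rowLen_iff_lt_colLen (μ := μ) (i := i) (j := j)
  have h₂ := lt_rowLen_iff_lt_colLen (μ := μ) (i := i) (j := j - 1)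
  omega

end YoungDiagram

open YoungDiagram

section Corners

variable {μ : YoungDiagram}

theorem hookLength_pos {i j : ℕ} (h : (i, j) ∈ μ) : 0 < hookLength μ i j := by
  have := mem_iff_lt_rowLen.1 h
  have := mem_iff_lt_colLen.1 h
  unfold hookLength
  omega

theorem hookLength_transpose (i j : ℕ) : hookLength μ.transpose i j = hookLength μ j i := by
  simp only [hookLength, rowLen_transpose, colLen_transpose]
  omega

theorem isAddable_iff {i j : ℕ} : IsAddable μ (i, j) ↔ μ.rowLen i = j ∧ μ.colLen j = i := by
  constructor
  · rintro ⟨hij, ν, hν⟩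
    have hμ : ∀ {c}, c ≤ (i, j) → c ≠ (i, j) → c ∈ μ := fun {c} hc hne => by
      have : c ∈ ν.cells :=
        ν.isLowerSet hc (by rw [mem_coe, hν]; exact mem_insert_self _ _)
      exact (mem_insert.1 (hν ▸ this)).resolve_left hne
    have hleft : j ≠ 0 → (i, j - 1) ∈ μ := fun hj => hμ ⟨le_rfl, Nat.sub_le j 1⟩ (by simp; omega)
    have hup : i ≠ 0 → (i - 1, j) ∈ μ := fun hi => hμ ⟨Nat.sub_le i 1, le_rfl⟩ (by simp; omega)
    rw [mem_iff_lt_rowLen] at hleft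
    rw [mem_iff_lt_colLen] at hup
    have := mem_iff_lt_rowLen.not.1 hij
    have := mem_iff_lt_colLen.not.1 hij
    omega
  · rintro ⟨hr, hc⟩
    refine ⟨by rw [mem_iff_lt_rowLen, hr]; exact lt_irrefl j, ⟨insert (i, j) μ.cells, ?_⟩, rfl⟩
    rintro ⟨a, b⟩ ⟨a', b'⟩ ⟨ha, hb⟩ hab
    simp only [coe_insert, Set.mem_insert_iff, Prod.mk.injEq, mem_coe, mem_cells] at hab ⊢
    rcases hab with ⟨rfl, rfl⟩ | hab
    · have := μ.rowLen_anti a' a ha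
      have := lt_rowLen_iff_lt_colLen (μ := μ) (i := a') (j := b')
      dsimp only at ha hb
      rw [mem_iff_lt_colLen]
      rcases hb.lt_or_eq with hb | rfl <;> omega
    · exact Or.inr (μ.up_left_mem ha hb hab)

theorem isRemovable_iff {i j : ℕ} :
    IsRemovable μ (i, j) ↔ μ.rowLen i = j + 1 ∧ μ.colLen j = i + 1 := by
  have hrow := mem_iff_lt_rowLen (μ := μ) (i := i) (j := j)
  have hcol := mem_iff_lt_colLen (μ := μ) (i := i) (j := j)
  constructor
  · rintro ⟨hij, ν, hν⟩
    have hμ : ∀ {c}, c ∈ μ → c ≠ (i, j) → ¬(i, j) ≤ c := fun {c} hc hne hle => by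
      have : (i, j) ∈ ν.cells :=
        ν.isLowerSet hle (by rw [mem_coe, hν]; exact mem_erase.2 ⟨hne, hc⟩)
      exact (mem_erase.1 (hν ▸ this)).1 rfl
    have hright : (i, j + 1) ∉ μ := fun h => hμ h (by simp) ⟨le_rfl, Nat.le_succ j⟩
    have hdown : (i + 1, j) ∉ μ := fun h => hμ h (by simp) ⟨Nat.le_succ i, le_rfl⟩
    rw [mem_iff_lt_rowLen] at hright
    rw [mem_iff_lt_colLen] at hdown
    have := hrow.1 hij
    have := hcol.1 hij
    omega
  · rintro ⟨hr, hc⟩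
    refine ⟨hrow.2 (by omega), ⟨μ.cells.erase (i, j), ?_⟩, rfl⟩
    rintro ⟨a, b⟩ ⟨a', b'⟩ ⟨ha, hb⟩ hab
    simp only [coe_erase, Set.mem_sdiff, Set.mem_singleton_iff, Prod.mk.injEq, mem_coe,
      mem_cells] at hab ⊢
    refine ⟨μ.up_left_mem ha hb hab.1, ?_⟩
    rintro ⟨rfl, rfl⟩
    have := μ.rowLen_anti a' a ha
    have := μ.colLen_anti b' b hb
    have := mem_iff_lt_rowLen.1 hab.1
    have := mem_iff_lt_colLen.1 hab.1
    omega

theorem isAddable_transpose {c : ℕ × ℕ} : IsAddable μ.transpose c ↔ IsAddable μ c.swap := by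
  obtain ⟨i, j⟩ := c
  simp only [Prod.swap_prod_mk, isAddable_iff, rowLen_transpose, colLen_transpose, and_comm]

theorem isRemovable_transpose {c : ℕ × ℕ} :
    IsRemovable μ.transpose c ↔ IsRemovable μ c.swap := by
  obtain ⟨i, j⟩ := c
  simp only [Prod.swap_prod_mk, isRemovable_iff, rowLen_transpose, colLen_transpose, and_comm]

theorem IsAddable.lt_rowLen {r s i : ℕ} (h : IsAddable μ (r, s)) (hi : i < r) :
    s < μ.rowLen i :=
  lt_rowLen_iff_lt_colLen.2 ((isAddable_iff.1 h).2 ▸ hi)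

theorem IsAddable.lt_colLen {r s j : ℕ} (h : IsAddable μ (r, s)) (hj : j < s) :
    r < μ.colLen j :=
  lt_rowLen_iff_lt_colLen.1 ((isAddable_iff.1 h).1 ▸ hj)

theorem finite_setOf_isAddable : {c | IsAddable μ c}.Finite := by
  refine (range (μ.colLen 0 + 1) ×ˢ range (μ.rowLen 0 + 1)).finite_toSet.subset ?_
  rintro ⟨i, j⟩ h
  rw [Set.mem_ofPred_eq, isAddable_iff] at h
  have := μ.rowLen_anti 0 i i.zero_le
  have := μ.colLen_anti 0 j j.zero_le
  simp only [coe_product, coe_range, Set.mem_prod, Set.mem_Iio]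
  omega

theorem finite_setOf_isRemovable : {c | IsRemovable μ c}.Finite :=
  μ.cells.finite_toSet.subset fun _ h => h.1

theorem setOf_isAddable_snd_lt (s : ℕ) :
    {c | IsAddable μ c ∧ c.2 < s} =
      ((range s).filter (fun j => j = 0 ∨ μ.colLen j < μ.colLen (j - 1))).image
        (fun j => (μ.colLen j, j)) := by
  ext ⟨i, j⟩
  simp only [Set.mem_ofPred_eq, isAddable_iff, rowLen_eq_iff, coe_image, coe_filter, mem_range,
    Set.mem_image, Prod.mk.injEq]
  constructor
  · rintro ⟨⟨⟨-, hj⟩, rfl⟩, hs⟩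
    exact ⟨j, ⟨hs, hj⟩, rfl, rfl⟩
  · rintro ⟨j, ⟨hs, hj⟩, rfl, rfl⟩
    exact ⟨⟨⟨le_rfl, hj⟩, rfl⟩, hs⟩

theorem setOf_isRemovable_snd_lt (s : ℕ) :
    {c | IsRemovable μ c ∧ c.2 < s} =
      ((range s).filter (fun j => μ.colLen (j + 1) < μ.colLen j)).image
        (fun j => (μ.colLen j - 1, j)) := by
  ext ⟨i, j⟩
  simp only [Set.mem_ofPred_eq, isRemovable_iff, rowLen_eq_iff, coe_image, coe_filter, mem_range,
    Set.mem_image, Prod.mk.injEq, Nat.add_sub_cancel, Nat.add_one_ne_zero, false_or]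
  constructor
  · rintro ⟨⟨⟨h₁, h₂⟩, h₃⟩, hs⟩
    exact ⟨j, ⟨hs, by omega⟩, by omega, rfl⟩
  · rintro ⟨j, ⟨hs, hj⟩, rfl, rfl⟩
    omega

variable {r s : ℕ}

theorem finprod_mem_isAddable_ne_eq_mul {M : Type*} [CommMonoid M] (h : IsAddable μ (r, s))
    (f : ℕ × ℕ → M) :
    ∏ᶠ c ∈ {c | IsAddable μ c ∧ c ≠ (r, s)}, f c =
      (∏ᶠ c ∈ {c | IsAddable μ c ∧ c.2 < s}, f c) *
        ∏ᶠ c ∈ {c | IsAddable μ c ∧ c.1 < r}, f c := by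
  obtain ⟨hr, hs⟩ := isAddable_iff.1 h
  have hset : {c | IsAddable μ c ∧ c ≠ (r, s)} =
      {c | IsAddable μ c ∧ c.2 < s} ∪ {c | IsAddable μ c ∧ c.1 < r} := by
    ext ⟨i, j⟩
    simp only [Set.mem_ofPred_eq, Set.mem_union, ne_eq, Prod.mk.injEq]
    constructor
    · rintro ⟨ha, hne⟩
      rcases lt_or_ge i r with hi | hi
      · exact Or.inr ⟨ha, hi⟩
      · obtain ⟨hi', hj'⟩ := isAddable_iff.1 ha
        have := μ.rowLen_anti r i hi
        rcases (show j ≤ s by omega).lt_or_eq with hj | rfl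
        · exact Or.inl ⟨ha, hj⟩
        · exact absurd ⟨by omega, rfl⟩ hne
    · rintro (⟨ha, hj⟩ | ⟨ha, hi⟩) <;> exact ⟨ha, by omega⟩
  refine hset ▸ finprod_mem_union (Set.disjoint_left.2 fun ⟨i, j⟩ ⟨ha, hj⟩ ⟨_, hi⟩ => ?_)
    (finite_setOf_isAddable.subset fun _ hc => hc.1)
    (finite_setOf_isAddable.subset fun _ hc => hc.1)
  have := h.lt_rowLen hi
  rw [(isAddable_iff.1 ha).1] at this
  exact absurd hj (by omega)

theorem finprod_mem_isRemovable_eq_mul {M : Type*} [CommMonoid M] (h : IsAddable μ (r, s))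
    (f : ℕ × ℕ → M) :
    ∏ᶠ c ∈ {c | IsRemovable μ c}, f c =
      (∏ᶠ c ∈ {c | IsRemovable μ c ∧ c.2 < s}, f c) *
        ∏ᶠ c ∈ {c | IsRemovable μ c ∧ c.1 < r}, f c := by
  have hset : {c | IsRemovable μ c} =
      {c | IsRemovable μ c ∧ c.2 < s} ∪ {c | IsRemovable μ c ∧ c.1 < r} := by
    ext ⟨i, j⟩
    simp only [Set.mem_ofPred_eq, Set.mem_union]
    refine ⟨fun hm => ?_, by rintro (⟨hm, -⟩ | ⟨hm, -⟩) <;> exact hm⟩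
    rcases lt_or_ge i r with hi | hi
    · exact Or.inr ⟨hm, hi⟩
    · have := μ.rowLen_anti r i hi
      have := (isRemovable_iff.1 hm).1
      have := (isAddable_iff.1 h).1
      exact Or.inl ⟨hm, by omega⟩
  refine hset ▸ finprod_mem_union (Set.disjoint_left.2 fun ⟨i, j⟩ ⟨hm, hj⟩ ⟨_, hi⟩ => ?_)
    (finite_setOf_isRemovable.subset fun _ hc => hc.1)
    (finite_setOf_isRemovable.subset fun _ hc => hc.1)
  have := h.lt_rowLen hi
  rw [(isRemovable_iff.1 hm).1] at this
  exact absurd hj (by omega)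

end Corners

section AddCell

variable {μ : YoungDiagram} {r s : ℕ}

theorem addCell_cells {c : ℕ × ℕ} (h : IsAddable μ c) :
    (addCell μ c).cells = insert c μ.cells := by
  rw [addCell, dif_pos h.2]
  exact h.2.choose_spec

theorem rowLen_addCell (h : IsAddable μ (r, s)) (i : ℕ) :
    (addCell μ (r, s)).rowLen i = μ.rowLen i + if i = r then 1 else 0 := by
  refine eq_of_forall_lt_iff fun j => ?_
  rw [← mem_iff_lt_rowLen, ← mem_cells, addCell_cells h, mem_insert, mem_cells,
    mem_iff_lt_rowLen, Prod.mk.injEq]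
  split_ifs with hi
  · subst hi
    have := (isAddable_iff.1 h).1
    omega
  · simp [hi]

theorem colLen_addCell (h : IsAddable μ (r, s)) (j : ℕ) :
    (addCell μ (r, s)).colLen j = μ.colLen j + if j = s then 1 else 0 := by
  refine eq_of_forall_lt_iff fun i => ?_
  rw [← mem_iff_lt_colLen, ← mem_cells, addCell_cells h, mem_insert, mem_cells,
    mem_iff_lt_colLen, Prod.mk.injEq]
  split_ifs with hj
  · subst hj
    have := (isAddable_iff.1 h).2
    omega
  · simp [hj]

theorem hookLength_addCell_self (h : IsAddable μ (r, s)) :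
    hookLength (addCell μ (r, s)) r s = 1 := by
  rw [hookLength, rowLen_addCell h, colLen_addCell h, if_pos rfl, if_pos rfl,
    (isAddable_iff.1 h).1, (isAddable_iff.1 h).2]
  omega

theorem hookLength_addCell (h : IsAddable μ (r, s)) {i j : ℕ} (hij : (i, j) ∈ μ) :
    hookLength (addCell μ (r, s)) i j = hookLength μ i j + if i = r ∨ j = s then 1 else 0 := by
  have := mem_iff_lt_rowLen.1 hij
  have := mem_iff_lt_colLen.1 hij
  have : ¬(i = r ∧ j = s) := fun ⟨hi, hj⟩ => h.1 (hi ▸ hj ▸ hij)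
  simp only [hookLength, rowLen_addCell h, colLen_addCell h]
  split_ifs <;> omega

theorem prod_hookLength_addCell {M : Type*} [CommGroupWithZero M] (F : ℕ → M)
    (hF : ∀ n, 0 < n → F n ≠ 0) (h : IsAddable μ (r, s)) :
    ∏ c ∈ μ.cells, F (hookLength (addCell μ (r, s)) c.1 c.2) =
      (∏ c ∈ μ.cells, F (hookLength μ c.1 c.2)) *
        (∏ j ∈ range s, F (hookLength μ r j + 1) / F (hookLength μ r j)) *
        ∏ i ∈ range r, F (hookLength μ i s + 1) / F (hookLength μ i s) := by
  set ρ : ℕ × ℕ → M := fun c => F (hookLength μ c.1 c.2 + 1) / F (hookLength μ c.1 c.2)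
  have hcell : ∀ c ∈ μ.cells, F (hookLength (addCell μ (r, s)) c.1 c.2) =
      F (hookLength μ c.1 c.2) * ((if c.1 = r then ρ c else 1) * if c.2 = s then ρ c else 1) := by
    rintro ⟨i, j⟩ hij
    have hF' := hF _ (hookLength_pos hij)
    rw [hookLength_addCell h hij]
    by_cases hi : i = r <;> by_cases hj : j = s
    · exact absurd (hi ▸ hj ▸ hij) h.1
    · subst hi
      simp [ρ, hj, mul_div_cancel₀ _ hF']
    · subst hj
      simp [ρ, hi, mul_div_cancel₀ _ hF']
    · simp [hi, hj]
  rw [prod_congr rfl hcell, prod_mul_distrib, prod_mul_distrib, ← prod_filter, ← prod_filter,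
    mul_assoc]
  change _ * ((∏ c ∈ μ.row r, ρ c) * ∏ c ∈ μ.col s, ρ c) = _
  rw [row_eq_prod, col_eq_prod, (isAddable_iff.1 h).1, (isAddable_iff.1 h).2, prod_product,
    prod_singleton, prod_product]
  simp only [prod_singleton, ρ]

end AddCell

section HookRatio

variable {K : Type*} [Field K] {μ : YoungDiagram} {r s : ℕ}

theorem prod_row_hookLength_succ_div (G : ℤ → K) (hG : ∀ n, 0 < n → G n ≠ 0)
    (h : IsAddable μ (r, s)) :
    ∏ j ∈ range s, G ↑(hookLength μ r j + 1) / G ↑(hookLength μ r j) =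
      (∏ᶠ c ∈ {c | IsAddable μ c ∧ c.2 < s}, G (content (r, s) - content c)) /
        ∏ᶠ c ∈ {c | IsRemovable μ c ∧ c.2 < s}, G (content (r, s) - content c) := by
  obtain ⟨hr, hs⟩ := isAddable_iff.1 h
  have hhook : ∀ j < s, (hookLength μ r j : ℤ) = content (r, s) - (j - μ.colLen j + 1) := by
    intro j hj
    have := h.lt_colLen hj
    rw [hookLength, hr, content]
    omega
  rw [setOf_isAddable_snd_lt, setOf_isRemovable_snd_lt, finprod_mem_coe_finset,
    finprod_mem_coe_finset, prod_image (by simp), prod_image (by simp)]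
  calc ∏ j ∈ range s, G ↑(hookLength μ r j + 1) / G ↑(hookLength μ r j)
      = ∏ j ∈ range s, G (content (r, s) - (j - μ.colLen j)) /
          G (content (r, s) - (j - μ.colLen j + 1)) := by
        refine prod_congr rfl fun j hj => ?_
        rw [Nat.cast_succ, hhook j (mem_range.1 hj)]
        ring_nf
    _ = _ := prod_range_div_eq_descents (fun n => G (content (r, s) - n)) μ.colLen
        (fun j _ => μ.colLen_anti j (j + 1) j.le_succ)
        (fun hs₀ => hs ▸ h.lt_colLen (Nat.sub_lt hs₀ one_pos))
        (fun j hj => by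
          rw [← hhook j hj]
          exact hG _ (by exact_mod_cast hookLength_pos (μ.mem_iff_lt_rowLen.2 (hr ▸ hj))))
    _ = _ := by
        congr 1
        refine prod_congr rfl fun j hj => ?_
        have := (mem_filter.1 hj).2
        simp only [content]
        congr 2
        omega

theorem prod_col_hookLength_succ_div (G : ℤ → K) (hG : ∀ n, 0 < n → G n ≠ 0)
    (hodd : ∀ n, G (-n) = -G n) (h : IsAddable μ (r, s)) :
    ∏ i ∈ range r, G ↑(hookLength μ i s + 1) / G ↑(hookLength μ i s) =
      (∏ᶠ c ∈ {c | IsAddable μ c ∧ c.1 < r}, G (content (r, s) - content c)) /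
        ∏ᶠ c ∈ {c | IsRemovable μ c ∧ c.1 < r}, G (content (r, s) - content c) := by
  have hA : {c | IsAddable μ.transpose c ∧ c.2 < r} =
      Prod.swap ⁻¹' {c | IsAddable μ c ∧ c.1 < r} := by
    ext
    simp [isAddable_transpose]
  have hR : {c | IsRemovable μ.transpose c ∧ c.2 < r} =
      Prod.swap ⁻¹' {c | IsRemovable μ c ∧ c.1 < r} := by
    ext
    simp [isRemovable_transpose]
  have hcontent : ∀ c : ℕ × ℕ, -(content (s, r) - content c.swap) = content (r, s) - content c :=
    fun c => by simp only [content, Prod.fst_swap, Prod.snd_swap]; ring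
  have key := prod_row_hookLength_succ_div (fun n => G (-n))
    (fun n hn => by rw [hodd]; exact neg_ne_zero.2 (hG n hn)) (isAddable_transpose.2 h)
  rw [hA, hR, finprod_mem_preimage_swap, finprod_mem_preimage_swap] at key
  simp only [hcontent, hookLength_transpose] at key
  rw [← key]
  refine prod_congr rfl fun i _ => ?_
  rw [hodd, hodd, neg_div_neg_eq]

theorem prod_hookLength_succ_div (G : ℤ → K) (hG : ∀ n, 0 < n → G n ≠ 0)
    (hodd : ∀ n, G (-n) = -G n) (h : IsAddable μ (r, s)) :
    (∏ j ∈ range s, G ↑(hookLength μ r j + 1) / G ↑(hookLength μ r j)) *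
        ∏ i ∈ range r, G ↑(hookLength μ i s + 1) / G ↑(hookLength μ i s) =
      (∏ᶠ c ∈ {c | IsAddable μ c ∧ c ≠ (r, s)}, G (content (r, s) - content c)) /
        ∏ᶠ c ∈ {c | IsRemovable μ c}, G (content (r, s) - content c) := by
  rw [prod_row_hookLength_succ_div G hG h, prod_col_hookLength_succ_div G hG hodd h,
    div_mul_div_comm, finprod_mem_isAddable_ne_eq_mul h, finprod_mem_isRemovable_eq_mul h]

end HookRatio

/-- Recursion for the hook-length product under adding an addable corner of content `k`:
the step of the proof of the trace formula `⟨λ⟩ = ∏_{c∈λ} i(q^{h(c)}+q^{-h(c)})/(q^{h(c)}-q^{-h(c)})`. -/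
theorem hook_product_recursion (q : ℂ) (hq : Transcendental ℚ q)
    (μ : YoungDiagram) (c₀ : ℕ × ℕ) (hc₀ : IsAddable μ c₀) (k : ℤ)
    (hk : content c₀ = k) :
    (∏ c ∈ (addCell μ c₀).cells, hookFactor q (hookLength (addCell μ c₀) c.1 c.2)) =
      (∏ c ∈ μ.cells, hookFactor q (hookLength μ c.1 c.2)) * hookFactor q 1 *
        (∏ᶠ c ∈ {c : ℕ × ℕ | IsAddable μ c ∧ c ≠ c₀},
          (q ^ (2 * k) + q ^ (2 * content c)) / (q ^ (2 * k) - q ^ (2 * content c))) *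
        (∏ᶠ c ∈ {c : ℕ × ℕ | IsRemovable μ c},
          (q ^ (2 * k) - q ^ (2 * content c)) / (q ^ (2 * k) + q ^ (2 * content c))) := by
  obtain ⟨r, s⟩ := c₀
  subst hk
  have hq₀ : q ≠ 0 := fun h => hq (h ▸ isAlgebraic_zero)
  have hQ : ∀ n : ℤ, 0 < n → qCoth q n ≠ 0 := fun n hn => by
    lift n to ℕ using hn.le
    exact qCoth_ne_zero hq₀ hq.not_isOfFinOrder (by exact_mod_cast hn)
  have hF : ∀ n, 0 < n → hookFactor q n ≠ 0 := fun n hn => by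
    rw [hookFactor_eq_mul_qCoth]
    exact mul_ne_zero Complex.I_ne_zero (hQ n (by exact_mod_cast hn))
  have hratio : ∀ n : ℕ, hookFactor q (n + 1) / hookFactor q n = qCoth q ↑(n + 1) / qCoth q n :=
    fun n => by simp only [hookFactor_eq_mul_qCoth, mul_div_mul_left _ _ Complex.I_ne_zero]
  rw [addCell_cells hc₀, prod_insert hc₀.1, hookLength_addCell_self hc₀,
    prod_hookLength_addCell _ hF hc₀]
  simp only [hratio]
  rw [mul_assoc (∏ c ∈ μ.cells, _), prod_hookLength_succ_div (qCoth q) hQ (qCoth_neg q) hc₀,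
    div_eq_mul_inv, ← finprod_mem_inv_distrib _ finite_setOf_isRemovable]
  simp only [qCoth_sub hq₀, inv_div]
  ring
end
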